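/- arXiv:2308.08317 — 11 statements merged into one kernel-verified Lean document; each statement's English description precedes it below -/
import Mathlib

section
/- Suppose Hypothesis (H) holds. Then the measure R_x(dy)ν(dx) on 𝕏 × 𝕏 is symmetric: for all A, B ∈ 𝒳, ∫_A R_x(B) ν(dx) = ∫_B R_x(A) ν(dx). -/
open MeasureTheory ProbabilityTheory ENNReal

/-- A sequence `X` is exchangeable under `P`: every finite prefix has a
permutation-invariant joint distribution. -/
def Exchangeable {Ω 𝕏 : Type*} [MeasurableSpace Ω] [MeasurableSpace 𝕏]
    (P : Measure Ω) (X : ℕ → Ω → 𝕏) : Prop :=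
  ∀ (n : ℕ) (σ : Equiv.Perm (Fin n)),
    P.map (fun ω (i : Fin n) => X (σ i) ω) = P.map (fun ω (i : Fin n) => X i ω)

/-- The predictive distributions of `X` are
`ℙ(X_{n+1} ∈ ·  | X_1,…,X_n) = (1 - a_n) ν + (a_n/n) ∑_{i=1}^n R_{X_i}` a.s.,
expressed in disintegrated form: for every measurable `B ⊆ 𝕏` and every
measurable set `A` of trajectories of the first `n` coordinates. -/
def PredEq {Ω 𝕏 : Type*} [MeasurableSpace Ω] [MeasurableSpace 𝕏]
    (P : Measure Ω) (X : ℕ → Ω → 𝕏) (ν : Measure 𝕏) (R : Kernel 𝕏 𝕏) (a : ℕ → ℝ) : Prop :=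
  ∀ n : ℕ, 1 ≤ n → ∀ B : Set 𝕏, MeasurableSet B → ∀ A : Set (Fin n → 𝕏), MeasurableSet A →
    P {ω | (fun i : Fin n => X i ω) ∈ A ∧ X n ω ∈ B} =
      ∫⁻ x in A, (ENNReal.ofReal (1 - a n) * ν B
          + (ENNReal.ofReal (a n) / (n : ℝ≥0∞)) * ∑ i : Fin n, R (x i) B)
        ∂(P.map (fun ω (i : Fin n) => X i ω))

/-- Hypothesis (H): `X` is exchangeable with marginal distribution `ν`, `R` is a
probability kernel, and the predictive distributions are as in `PredEq` with
constants `a n ∈ (0,1)`. -/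
structure HypH {Ω 𝕏 : Type*} [MeasurableSpace Ω] [MeasurableSpace 𝕏]
    (P : Measure Ω) (X : ℕ → Ω → 𝕏) (ν : Measure 𝕏) (R : Kernel 𝕏 𝕏) (a : ℕ → ℝ) : Prop where
  probP : IsProbabilityMeasure P
  probν : IsProbabilityMeasure ν
  markov : IsMarkovKernel R
  meas : ∀ n, Measurable (X n)
  exch : Exchangeable P X
  marginal : ∀ n, P.map (X n) = ν
  a_mem : ∀ n, 1 ≤ n → a n ∈ Set.Ioo (0 : ℝ) 1
  pred : PredEq P X ν R a

/-- `X` is a measure-valued Pólya urn sequence with parameters `(θ, ν, R)`. -/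
def IsMVPS {Ω 𝕏 : Type*} [MeasurableSpace Ω] [MeasurableSpace 𝕏]
    (P : Measure Ω) (X : ℕ → Ω → 𝕏) (θ : ℝ) (ν : Measure 𝕏) (R : Kernel 𝕏 𝕏) : Prop :=
  0 < θ ∧ P.map (X 0) = ν ∧
  ∀ n : ℕ, 1 ≤ n → ∀ B : Set 𝕏, MeasurableSet B → ∀ A : Set (Fin n → 𝕏), MeasurableSet A →
    P {ω | (fun i : Fin n => X i ω) ∈ A ∧ X n ω ∈ B} =
      ∫⁻ x in A, ((ENNReal.ofReal θ * ν B + ∑ i : Fin n, R (x i) B)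
          / (ENNReal.ofReal θ + (n : ℝ≥0∞)))
        ∂(P.map (fun ω (i : Fin n) => X i ω))

/-- under Hypothesis (H), the measure `R_x(dy) ν(dx)` is symmetric. -/
theorem kernel_nu_symmetric {Ω 𝕏 : Type*} [MeasurableSpace Ω] [MeasurableSpace 𝕏]
    [StandardBorelSpace 𝕏]
    (P : Measure Ω) (X : ℕ → Ω → 𝕏) (ν : Measure 𝕏) (R : Kernel 𝕏 𝕏) (a : ℕ → ℝ)
    (hH : HypH P X ν R a) :
    ∀ A B : Set 𝕏, MeasurableSet A → MeasurableSet B →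
      ∫⁻ x in A, R x B ∂ν = ∫⁻ x in B, R x A ∂ν := by
  intro A B hA hB
  have hP := hH.probP
  have hν := hH.probν
  have hR := hH.markov
  have ha := hH.a_mem 1 le_rfl
  have hRB : ∀ C : Set 𝕏, MeasurableSet C → Measurable fun x : 𝕏 => R x C :=
    fun C hC => Kernel.measurable_coe R hC
  -- key computation from the predictive equation at n = 1
  have key : ∀ A B : Set 𝕏, MeasurableSet A → MeasurableSet B →
      P {ω | X 0 ω ∈ A ∧ X 1 ω ∈ B}
        = ENNReal.ofReal (1 - a 1) * ν B * ν A
          + ENNReal.ofReal (a 1) * ∫⁻ x in A, R x B ∂ν := by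
    intro A B hA hB
    have hA' : MeasurableSet ((fun f : Fin 1 → 𝕏 => f 0) ⁻¹' A) :=
      (measurable_pi_apply 0) hA
    have h := hH.pred 1 le_rfl B hB _ hA'
    have hg : Measurable fun x : 𝕏 => ENNReal.ofReal (1 - a 1) * ν B
        + ENNReal.ofReal (a 1) * R x B :=
      measurable_const.add ((hRB B hB).const_mul _)
    have hmap : Measurable fun ω (i : Fin 1) => X (i : ℕ) ω :=
      measurable_pi_lambda _ (fun i => hH.meas _)
    simp only [Fin.sum_univ_one, Nat.cast_one, div_one] at h
    have hint : ∫⁻ x in (fun f : Fin 1 → 𝕏 => f 0) ⁻¹' A,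
        (ENNReal.ofReal (1 - a 1) * ν B + ENNReal.ofReal (a 1) * R (x 0) B)
          ∂(Measure.map (fun ω (i : Fin 1) => X (i : ℕ) ω) P)
        = ∫⁻ ω in X 0 ⁻¹' A, (ENNReal.ofReal (1 - a 1) * ν B
            + ENNReal.ofReal (a 1) * R (X 0 ω) B) ∂P :=
      setLIntegral_map hA' (hg.comp (measurable_pi_apply 0)) hmap
    rw [hint] at h
    have h2 : ∫⁻ x in A, (ENNReal.ofReal (1 - a 1) * ν B
        + ENNReal.ofReal (a 1) * R x B) ∂ν
        = ∫⁻ ω in X 0 ⁻¹' A, (ENNReal.ofReal (1 - a 1) * ν B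
            + ENNReal.ofReal (a 1) * R (X 0 ω) B) ∂P := by
      have := setLIntegral_map (μ := P) hA hg (hH.meas 0)
      rwa [hH.marginal 0] at this
    rw [← h2] at h
    have hset : {ω | (fun i : Fin 1 => X (i : ℕ) ω) ∈ ((fun f : Fin 1 → 𝕏 => f 0) ⁻¹' A)
        ∧ X 1 ω ∈ B} = {ω | X 0 ω ∈ A ∧ X 1 ω ∈ B} := rfl
    rw [hset] at h
    rw [h, lintegral_add_left measurable_const, setLIntegral_const,
      lintegral_const_mul _ (hRB B hB), mul_assoc]
  -- exchangeability at n = 2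
  have exch2 : P {ω | X 0 ω ∈ A ∧ X 1 ω ∈ B} = P {ω | X 0 ω ∈ B ∧ X 1 ω ∈ A} := by
    have h := hH.exch 2 (Equiv.swap 0 1)
    set S : Set (Fin 2 → 𝕏) := (fun f : Fin 2 → 𝕏 => f 0) ⁻¹' A ∩ (fun f => f 1) ⁻¹' B
      with hSdef
    have hS : MeasurableSet S :=
      ((measurable_pi_apply 0) hA).inter ((measurable_pi_apply 1) hB)
    have hm1 : Measurable fun ω (i : Fin 2) => X ((Equiv.swap 0 1 i : Fin 2) : ℕ) ω :=
      measurable_pi_lambda _ (fun i => hH.meas _)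
    have hm2 : Measurable fun ω (i : Fin 2) => X (i : ℕ) ω :=
      measurable_pi_lambda _ (fun i => hH.meas _)
    have h1 := congrArg (fun μ : Measure (Fin 2 → 𝕏) => μ S) h
    simp only [Measure.map_apply hm1 hS, Measure.map_apply hm2 hS] at h1
    have e1 : (fun ω (i : Fin 2) => X ((Equiv.swap 0 1 i : Fin 2) : ℕ) ω) ⁻¹' S
        = {ω | X 0 ω ∈ B ∧ X 1 ω ∈ A} := by
      ext ω
      simp only [hSdef, Set.mem_preimage, Set.mem_inter_iff, Set.mem_setOf_eq]
      rw [Equiv.swap_apply_left, Equiv.swap_apply_right]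
      exact and_comm
    have e2 : (fun ω (i : Fin 2) => X (i : ℕ) ω) ⁻¹' S
        = {ω | X 0 ω ∈ A ∧ X 1 ω ∈ B} := rfl
    rw [e1, e2] at h1
    exact h1.symm
  have hAB := key A B hA hB
  have hBA := key B A hB hA
  rw [hAB, hBA] at exch2
  rw [mul_right_comm (ENNReal.ofReal (1 - a 1)) (ν B) (ν A)] at exch2
  have hfin : ENNReal.ofReal (1 - a 1) * ν A * ν B ≠ ∞ :=
    ENNReal.mul_ne_top (ENNReal.mul_ne_top ENNReal.ofReal_ne_top (measure_ne_top ν A))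
      (measure_ne_top ν B)
  have h3 := (ENNReal.add_right_inj hfin).mp exch2
  exact (ENNReal.mul_right_inj (by simpa using ha.1) ENNReal.ofReal_ne_top).mp h3
end

section
/- Suppose Hypothesis (H) holds. Then ν is invariant for the kernel R: for every B ∈ 𝒳, ∫_𝕏 R_x(B) ν(dx) = ν(B). -/
open MeasureTheory ProbabilityTheory ENNReal

/-- under Hypothesis (H), `ν` is invariant for the kernel `R`. -/
theorem nu_invariant {Ω 𝕏 : Type*} [MeasurableSpace Ω] [MeasurableSpace 𝕏]
    [StandardBorelSpace 𝕏]
    (P : Measure Ω) (X : ℕ → Ω → 𝕏) (ν : Measure 𝕏) (R : Kernel 𝕏 𝕏) (a : ℕ → ℝ)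
    (hH : HypH P X ν R a) :
    ∀ B : Set 𝕏, MeasurableSet B → ∫⁻ x, R x B ∂ν = ν B := by
  intro B hB
  obtain ⟨ha0, ha1⟩ := hH.a_mem 1 le_rfl
  have hX : ∀ n, Measurable (X n) := hH.meas
  haveI := hH.probP
  haveI := hH.probν
  haveI := hH.markov
  have hmeas1 : Measurable fun ω (i : Fin 1) => X i ω :=
    measurable_pi_lambda _ fun i => hX i
  have h := hH.pred 1 le_rfl B hB Set.univ MeasurableSet.univ
  have hLHS : P {ω | (fun i : Fin 1 => X i ω) ∈ (Set.univ : Set (Fin 1 → 𝕏)) ∧ X 1 ω ∈ B}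
      = ν B := by
    have hset : {ω | (fun i : Fin 1 => X i ω) ∈ (Set.univ : Set (Fin 1 → 𝕏)) ∧ X 1 ω ∈ B}
        = X 1 ⁻¹' B := by
      ext ω; simp
    rw [hset, ← hH.marginal 1, Measure.map_apply (hX 1) hB]
  have hmap : (P.map (fun ω (i : Fin 1) => X i ω)).map (fun x => x 0) = ν := by
    rw [Measure.map_map (measurable_pi_apply 0) hmeas1]
    exact hH.marginal 0
  have hmeasf : Measurable fun x : Fin 1 → 𝕏 => R (x 0) B :=
    (R.measurable_coe hB).comp (measurable_pi_apply 0)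
  have hI : ∫⁻ x : Fin 1 → 𝕏, R (x 0) B ∂(P.map (fun ω (i : Fin 1) => X i ω))
      = ∫⁻ y, R y B ∂ν := by
    rw [← hmap, lintegral_map (R.measurable_coe hB) (measurable_pi_apply 0)]
  haveI : IsProbabilityMeasure (P.map (fun ω (i : Fin 1) => X i ω)) :=
    Measure.isProbabilityMeasure_map hmeas1.aemeasurable
  rw [hLHS, Measure.restrict_univ] at h
  simp only [Fin.sum_univ_one, Nat.cast_one, div_one] at h
  rw [lintegral_add_left measurable_const, lintegral_const, measure_univ, mul_one,
      lintegral_const_mul _ hmeasf, hI] at h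
  -- h : ν B = ofReal (1 - a 1) * ν B + ofReal (a 1) * ∫⁻ y, R y B ∂ν
  set s := ENNReal.ofReal (1 - a 1) with hs
  set t := ENNReal.ofReal (a 1) with ht
  have hst : s + t = 1 := by
    rw [hs, ht, ← ENNReal.ofReal_add (by linarith) ha0.le]
    norm_num
  have hνB : ν B = s * ν B + t * ν B := by
    rw [← add_mul, hst, one_mul]
  nth_rewrite 1 [hνB] at h
  have hsfin : s * ν B ≠ ∞ := by
    apply ENNReal.mul_ne_top ENNReal.ofReal_ne_top
    exact (measure_lt_top ν B).ne
  have h2 : t * ν B = t * ∫⁻ y, R y B ∂ν := (ENNReal.add_right_inj hsfin).mp h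
  have ht0 : t ≠ 0 := by
    simp [ht, ENNReal.ofReal_eq_zero, not_le, ha0]
  exact ((ENNReal.mul_right_inj ht0 ENNReal.ofReal_ne_top).mp h2).symm
end

section
/- Suppose Hypothesis (H) holds and set c* := (a_2 − 2a_1 + a_1a_2)/(a_1a_2). Then for ν-almost every x ∈ 𝕏, the following identity of measures holds: ∫_𝕏 R_y(B) R_x(dy) = (1 − c*)·R_x(B) + c*·ν(B) for every B ∈ 𝒳. -/
open MeasureTheory ProbabilityTheory ENNReal

/-!
The rule for `n = 1` says that `(X₀, X₁)` has law `ν ⊗ K` with `K x = (1 - a₁) ν + a₁ R_x`; since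
`X₁ ~ ν`, its second marginal gives `∫ R_y ν(dy) = ν`. Integrating the rule for `n = 2` over
`X₁ ~ K X₀` shows that `(X₀, X₂)` has law `ν ⊗ K'` with
`K' x = (1 - a₂) ν + (a₂ / 2) (R_x + ∫ R_y K_x(dy))`, and by invariance
`∫ R_y K_x(dy) = (1 - a₁) ν + a₁ ∫ R_y R_x(dy)`. Exchangeability makes the two laws equal, so
`K = K'` ν-a.e. (disintegrations are unique on standard Borel spaces), and this affine relation
can be solved for `∫ R_y R_x(dy)`.
-/

open scoped NNReal

namespace ProbabilityTheory.Kernel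

variable {α β γ : Type*} [MeasurableSpace α] [MeasurableSpace β] [MeasurableSpace γ]
  {μ : Measure β} {κ : Kernel α β} {t : ℝ}

noncomputable instance instSMulNNReal : SMul ℝ≥0 (Kernel α β) where
  smul c κ := ⟨c • ⇑κ, Measure.measurable_of_measurable_coe _ fun _ hs =>
    (κ.measurable_coe hs).const_mul c⟩

instance : IsSMulApply ℝ≥0 (Kernel α β) α (Measure β) where
  smul_apply _ _ _ := rfl

instance (c : ℝ≥0) (κ : Kernel α β) [IsFiniteKernel κ] : IsFiniteKernel (c • κ) :=
  ⟨c * κ.bound, mul_lt_top coe_lt_top κ.bound_lt_top,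
    fun a => by simpa using mul_le_mul_right (κ.measure_le_bound a Set.univ) (c : ℝ≥0∞)⟩

noncomputable def mixConst (μ : Measure β) (κ : Kernel α β) (t : ℝ) : Kernel α β :=
  (1 - t).toNNReal • const α μ + t.toNNReal • κ

instance [IsFiniteMeasure μ] [IsFiniteKernel κ] : IsFiniteKernel (mixConst μ κ t) := by
  unfold mixConst; infer_instance

lemma mixConst_apply (x : α) : mixConst μ κ t x = (1 - t).toNNReal • μ + t.toNNReal • κ x := rfl

lemma mixConst_apply_apply (x : α) (s : Set β) :
    mixConst μ κ t x s = ENNReal.ofReal (1 - t) * μ s + ENNReal.ofReal t * κ x s := rfl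

lemma measureReal_mixConst_apply [IsFiniteMeasure μ] [IsFiniteKernel κ] (ht₀ : 0 ≤ t)
    (ht₁ : t ≤ 1) (x : α) (s : Set β) :
    (mixConst μ κ t x).real s = (1 - t) * μ.real s + t * (κ x).real s := by
  rw [mixConst_apply, measureReal_add_apply, measureReal_nnreal_smul_apply,
    measureReal_nnreal_smul_apply, Real.coe_toNNReal _ (by linarith), Real.coe_toNNReal _ ht₀]

lemma isMarkovKernel_mixConst [IsProbabilityMeasure μ] [IsMarkovKernel κ] (ht₀ : 0 ≤ t)
    (ht₁ : t ≤ 1) : IsMarkovKernel (mixConst μ κ t) :=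
  ⟨fun x => ⟨by rw [mixConst_apply_apply, measure_univ, measure_univ, mul_one, mul_one,
    ← ENNReal.ofReal_add (by linarith) ht₀, sub_add_cancel, ENNReal.ofReal_one]⟩⟩

lemma comp_mixConst (η : Kernel β γ) :
    η ∘ₖ mixConst μ κ t = mixConst (η ∘ₘ μ) (η ∘ₖ κ) t := by
  ext x s hs
  rw [comp_apply' _ _ _ hs, mixConst_apply, mixConst_apply_apply, lintegral_add_measure,
    lintegral_smul_measure, lintegral_smul_measure, Measure.bind_apply hs η.aemeasurable,
    comp_apply' _ _ _ hs]
  rfl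

lemma comp_eq_self_of_mixConst_comp_eq_self [IsProbabilityMeasure μ] {κ : Kernel β β}
    (ht₀ : 0 < t) (ht₁ : t ≤ 1) (h : mixConst μ κ t ∘ₘ μ = μ) : κ ∘ₘ μ = μ := by
  ext s hs
  have hs' := congrArg (· s) h
  simp only [Measure.bind_apply hs (Kernel.aemeasurable _), mixConst_apply_apply] at hs'
  rw [lintegral_add_left measurable_const, MeasureTheory.lintegral_const, measure_univ, mul_one,
    lintegral_const_mul _ (κ.measurable_coe hs), ← Measure.bind_apply hs κ.aemeasurable] at hs'
  have hsplit : μ s = ENNReal.ofReal (1 - t) * μ s + ENNReal.ofReal t * μ s := by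
    rw [← add_mul, ← ENNReal.ofReal_add (by linarith) ht₀.le, sub_add_cancel, ENNReal.ofReal_one,
      one_mul]
  conv_rhs at hs' => rw [hsplit]
  rwa [ENNReal.add_right_inj (by finiteness),
    ENNReal.mul_right_inj (by simpa using ht₀) ENNReal.ofReal_ne_top] at hs'

lemma integral_toReal_eq_measureReal_comp_apply (η : Kernel β γ) [IsFiniteKernel η]
    (κ : Kernel α β) (x : α) {s : Set γ} (hs : MeasurableSet s) :
    ∫ y, (η y s).toReal ∂(κ x) = ((η ∘ₖ κ) x).real s := by
  rw [measureReal_def, comp_apply' _ _ _ hs,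
    integral_toReal (η.measurable_coe hs).aemeasurable (ae_of_all _ fun y => measure_lt_top _ _)]

end ProbabilityTheory.Kernel

open Kernel

section

variable {Ω 𝕏 : Type*} [MeasurableSpace Ω] [MeasurableSpace 𝕏] {P : Measure Ω}
  {X : ℕ → Ω → 𝕏} {ν : Measure 𝕏} {R : Kernel 𝕏 𝕏} {a : ℕ → ℝ}

lemma Exchangeable.map_prodMk_comp_perm (h : Exchangeable P X) (hX : ∀ n, Measurable (X n))
    {n : ℕ} (σ : Equiv.Perm (Fin n)) (i j : Fin n) :
    P.map (fun ω => (X (σ i) ω, X (σ j) ω)) = P.map (fun ω => (X i ω, X j ω)) := by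
  have hpair : Measurable fun p : Fin n → 𝕏 => (p i, p j) := by fun_prop
  have hσ : Measurable fun ω (k : Fin n) => X (σ k) ω := by fun_prop
  have hid : Measurable fun ω (k : Fin n) => X k ω := by fun_prop
  have := congrArg (Measure.map fun p : Fin n → 𝕏 => (p i, p j)) (h n σ)
  rwa [Measure.map_map hpair hσ, Measure.map_map hpair hid] at this

lemma PredEq.map_prodMk_zero_one (hpred : PredEq P X ν R a) (hX : ∀ n, Measurable (X n))
    [IsFiniteMeasure P] [IsFiniteMeasure ν] [IsFiniteKernel R] :
    P.map (fun ω => (X 0 ω, X 1 ω)) = P.map (X 0) ⊗ₘ mixConst ν R (a 1) := by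
  have hX₀ : P.map (X 0) = (P.map fun ω (i : Fin 1) => X i ω).map (fun p => p 0) := by
    rw [Measure.map_map (measurable_pi_apply 0) (by fun_prop)]; rfl
  refine Measure.ext_prod fun {A B} hA hB => ?_
  have h := hpred 1 le_rfl B hB ((fun p : Fin 1 → 𝕏 => p 0) ⁻¹' A) (measurable_pi_apply 0 hA)
  rw [Measure.map_apply (by fun_prop) (hA.prod hB), Measure.compProd_apply_prod hA hB, hX₀,
    setLIntegral_map hA (Kernel.measurable_coe _ hB) (measurable_pi_apply 0)]
  refine h.trans (lintegral_congr fun x => ?_)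
  simp [mixConst_apply_apply]

lemma PredEq.measure_zero_two (hpred : PredEq P X ν R a) (hX : ∀ n, Measurable (X n))
    {A B : Set 𝕏} (hA : MeasurableSet A) (hB : MeasurableSet B) :
    P {ω | X 0 ω ∈ A ∧ X 2 ω ∈ B} =
      ∫⁻ q in A ×ˢ Set.univ, ENNReal.ofReal (1 - a 2) * ν B
          + ENNReal.ofReal (a 2) / 2 * (R q.1 B + R q.2 B)
        ∂(P.map fun ω => (X 0 ω, X 1 ω)) := by
  have hpair : Measurable fun p : Fin 2 → 𝕏 => (p 0, p 1) := by fun_prop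
  have hX₀₁ : (P.map fun ω => (X 0 ω, X 1 ω)) =
      (P.map fun ω (i : Fin 2) => X i ω).map (fun p => (p 0, p 1)) := by
    rw [Measure.map_map hpair (by fun_prop)]; rfl
  have h := hpred 2 (by norm_num) B hB ((fun p : Fin 2 → 𝕏 => p 0) ⁻¹' A)
    (measurable_pi_apply 0 hA)
  have hRB : Measurable fun x => R x B := R.measurable_coe hB
  rw [hX₀₁, setLIntegral_map (hA.prod .univ) (by fun_prop) hpair, Set.prod_univ]
  simpa [Fin.sum_univ_two, Set.preimage_preimage] using h

lemma PredEq.map_prodMk_zero_two (hpred : PredEq P X ν R a) (hX : ∀ n, Measurable (X n))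
    [IsFiniteMeasure P] [IsProbabilityMeasure ν] [IsMarkovKernel R] (ha₀ : 0 ≤ a 1)
    (ha₁ : a 1 ≤ 1)
    (h01 : P.map (fun ω => (X 0 ω, X 1 ω)) = ν ⊗ₘ mixConst ν R (a 1)) :
    P.map (fun ω => (X 0 ω, X 2 ω)) =
      ν ⊗ₘ mixConst ν ((2⁻¹ : ℝ≥0) • (R + R ∘ₖ mixConst ν R (a 1))) (a 2) := by
  have : IsMarkovKernel (mixConst ν R (a 1)) := isMarkovKernel_mixConst ha₀ ha₁
  refine Measure.ext_prod fun {A B} hA hB => ?_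
  have hRB : Measurable fun x => R x B := R.measurable_coe hB
  rw [Measure.map_apply (by fun_prop) (hA.prod hB), Measure.compProd_apply_prod hA hB]
  refine (hpred.measure_zero_two hX hA hB).trans ?_
  rw [h01, Measure.setLIntegral_compProd (by fun_prop) hA .univ]
  refine setLIntegral_congr_fun hA fun x _ => ?_
  dsimp only
  rw [Measure.restrict_univ, lintegral_add_left measurable_const, MeasureTheory.lintegral_const,
    measure_univ, mul_one, lintegral_const_mul _ (by fun_prop),
    lintegral_add_left measurable_const, MeasureTheory.lintegral_const, measure_univ, mul_one,
    ← comp_apply' _ _ _ hB]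
  simp only [mixConst_apply_apply, smul_apply, add_apply, Measure.smul_apply, Measure.add_apply,
    ENNReal.smul_def, smul_eq_mul, ENNReal.coe_inv two_ne_zero, ENNReal.coe_ofNat, div_eq_mul_inv]
  ring

end

/-- under Hypothesis (H), with `c* = (a₂ - 2a₁ + a₁a₂)/(a₁a₂)`,
for ν-a.e. `x`: `∫ R_y(B) R_x(dy) = (1 - c*) R_x(B) + c* ν(B)` for every measurable `B`. -/
theorem kernel_square_identity {Ω 𝕏 : Type*} [MeasurableSpace Ω] [MeasurableSpace 𝕏]
    [StandardBorelSpace 𝕏]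
    (P : Measure Ω) (X : ℕ → Ω → 𝕏) (ν : Measure 𝕏) (R : Kernel 𝕏 𝕏) (a : ℕ → ℝ)
    (hH : HypH P X ν R a) :
    ∀ᵐ x ∂ν, ∀ B : Set 𝕏, MeasurableSet B →
      ∫ y, (R y B).toReal ∂(R x) =
        (1 - (a 2 - 2 * a 1 + a 1 * a 2) / (a 1 * a 2)) * (R x B).toReal
          + (a 2 - 2 * a 1 + a 1 * a 2) / (a 1 * a 2) * (ν B).toReal := by
  obtain ⟨hP, hν, hR, hX, hexch, hmarg, ha, hpred⟩ := hH
  obtain ⟨ha₁, ha₁'⟩ := ha 1 le_rfl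
  obtain ⟨ha₂, ha₂'⟩ := ha 2 one_le_two
  have h01 : P.map (fun ω => (X 0 ω, X 1 ω)) = ν ⊗ₘ mixConst ν R (a 1) := by
    rw [hpred.map_prodMk_zero_one hX, hmarg 0]
  have hinv : R ∘ₘ ν = ν := by
    refine comp_eq_self_of_mixConst_comp_eq_self ha₁ ha₁'.le ?_
    rw [← Measure.snd_compProd, ← h01, Measure.snd_map_prodMk (hX 0), hmarg 1]
  have h02 := hpred.map_prodMk_zero_two hX ha₁.le ha₁'.le h01
  have h20 : P.map (fun ω => (X 0 ω, X 2 ω)) = P.map (fun ω => (X 0 ω, X 1 ω)) :=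
    (hexch.map_prodMk_comp_perm hX (Equiv.swap (1 : Fin 3) 2) 0 2).symm
  filter_upwards [Kernel.ae_eq_of_compProd_eq (h01.symm.trans (h20.symm.trans h02))]
    with x hx B hB
  have hxB := congrArg (fun μ => μ.real B) hx
  simp only [measureReal_mixConst_apply ha₁.le ha₁'.le, measureReal_mixConst_apply ha₂.le ha₂'.le,
    comp_mixConst, hinv, smul_apply, add_apply, measureReal_nnreal_smul_apply] at hxB
  rw [measureReal_add_apply, measureReal_mixConst_apply ha₁.le ha₁'.le] at hxB
  rw [integral_toReal_eq_measureReal_comp_apply R R x hB]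
  simp only [measureReal_def, NNReal.coe_inv, NNReal.coe_ofNat] at hxB ⊢
  field_simp
  linear_combination (-2) * hxB
end

section
/- Suppose Hypothesis (H) holds and set c* := (a_2 − 2a_1 + a_1a_2)/(a_1a_2). Then for every n ≥ 2 and for ν-almost every x ∈ 𝕏, (n·a_{n+1} − (n+1)·a_n + (1−c*)·a_n·a_{n+1})·ν(B) = (n·a_{n+1} − (n+1)·a_n + (1−c*)·a_n·a_{n+1})·R_x(B) for every B ∈ 𝒳. -/
open MeasureTheory ProbabilityTheory ENNReal

/-! Conditioning on `X 0 = x`, the predictive rule at step `n` expresses `ℙ(X n ∈ B | X 0 = x)`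
through `ν B`, `R x B` and the two-step kernel `(R ∘ₖ R) x B`: the summands `R_{X_i}(B)`, `i ≥ 1`,
are handled with the case `n = 1`, together with the `R`-invariance of `ν` (the case `n = 1`
integrated over all `x`). Exchangeability makes this conditional probability independent of
`n ≥ 1`, which gives, for `ν`-a.e. `x`, the linear relations
`(a n - n a 1) (R x B - ν B) + (n - 1) a n a 1 ((R ∘ₖ R) x B - ν B) = 0`.
Eliminating `(R ∘ₖ R) x B` between the relations for `2`, `n` and `n + 1` leaves
`C · a 1 a 2 · (R x B - ν B) = 0`, where `C` is the coefficient of the theorem. If `C ≠ 0`, then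
`R x B = ν B` a.e. for each `B`, and since `𝕏` is countably generated, `R x = ν` for a.e. `x`. -/

theorem ProbabilityTheory.Kernel.ae_eq_of_forall_ae_apply_eq {α β : Type*} [MeasurableSpace α]
    [MeasurableSpace β] [MeasurableSpace.CountableOrCountablyGenerated α β] {μ : Measure α}
    [IsFiniteMeasure μ] {κ η : Kernel α β} [IsFiniteKernel κ] [IsFiniteKernel η]
    (h : ∀ s, MeasurableSet s → ∀ᵐ a ∂μ, κ a s = η a s) : κ =ᵐ[μ] η := by
  refine Kernel.ae_eq_of_compProd_eq (Measure.ext_prod fun hs ht => ?_)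
  rw [Measure.compProd_apply_prod hs ht, Measure.compProd_apply_prod hs ht]
  exact setLIntegral_congr_fun_ae hs ((h _ ht).mono fun a ha _ => ha)

theorem Exchangeable.map_pair_eq {Ω 𝕏 : Type*} [MeasurableSpace Ω] [MeasurableSpace 𝕏]
    {P : Measure Ω} {X : ℕ → Ω → 𝕏} (hX : Exchangeable P X) (hmeas : ∀ n, Measurable (X n))
    {i : ℕ} (hi : i ≠ 0) :
    P.map (fun ω => (X 0 ω, X i ω)) = P.map (fun ω => (X 0 ω, X 1 ω)) := by
  obtain ⟨j, rfl⟩ := Nat.exists_eq_succ_of_ne_zero hi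
  let σ : Equiv.Perm (Fin (j + 2)) := Equiv.swap 1 (Fin.last (j + 1))
  have h := congrArg (Measure.map fun x : Fin (j + 2) → 𝕏 => (x 0, x 1)) (hX (j + 2) σ)
  rw [Measure.map_map (by fun_prop) (by fun_prop), Measure.map_map (by fun_prop) (by fun_prop)] at h
  convert h using 2 <;> ext ω <;> simp [σ, Equiv.swap_apply_of_ne_of_ne, Fin.ext_iff]

section

variable {𝕏 : Type*} [MeasurableSpace 𝕏]

/-- `ℙ(X (m + 1) ∈ B | X 0 = x)` under (H). The sequence is indexed from `0`, so `a (m + 1)`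
is the coefficient predicting `X (m + 1)` from `X 0, …, X m`. -/
noncomputable def condProbGivenFirst (ν : Measure 𝕏) (R : Kernel 𝕏 𝕏) (a : ℕ → ℝ) (m : ℕ)
    (B : Set 𝕏) (x : 𝕏) : ℝ≥0∞ :=
  ENNReal.ofReal (1 - a (m + 1)) * ν B + ENNReal.ofReal (a (m + 1)) / (m + 1 : ℕ) *
    (R x B + m * (ENNReal.ofReal (1 - a 1) * ν B + ENNReal.ofReal (a 1) * (R ∘ₖ R) x B))

theorem measurable_condProbGivenFirst (ν : Measure 𝕏) (R : Kernel 𝕏 𝕏) (a : ℕ → ℝ) (m : ℕ)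
    {B : Set 𝕏} (hB : MeasurableSet B) : Measurable (condProbGivenFirst ν R a m B) := by
  have := R.measurable_coe hB
  have := (R ∘ₖ R).measurable_coe hB
  unfold condProbGivenFirst
  fun_prop

theorem toReal_condProbGivenFirst {ν : Measure 𝕏} [IsFiniteMeasure ν] {R : Kernel 𝕏 𝕏}
    [IsFiniteKernel R] {a : ℕ → ℝ} {m : ℕ} (ha₀ : 0 ≤ a (m + 1)) (ha₁ : a (m + 1) ≤ 1)
    (ha₀' : 0 ≤ a 1) (ha₁' : a 1 ≤ 1) (B : Set 𝕏) (x : 𝕏) :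
    (condProbGivenFirst ν R a m B x).toReal = (1 - a (m + 1)) * (ν B).toReal
      + a (m + 1) / (m + 1) * ((R x B).toReal
        + m * ((1 - a 1) * (ν B).toReal + a 1 * ((R ∘ₖ R) x B).toReal)) := by
  simp [condProbGivenFirst, ENNReal.toReal_add, ENNReal.mul_eq_top, ENNReal.div_eq_top,
    ENNReal.toReal_ofReal, *]

end

namespace HypH

variable {Ω 𝕏 : Type*} [MeasurableSpace Ω] [MeasurableSpace 𝕏] {P : Measure Ω} {X : ℕ → Ω → 𝕏}
  {ν : Measure 𝕏} {R : Kernel 𝕏 𝕏} {a : ℕ → ℝ} {A B : Set 𝕏}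

theorem setLIntegral_comp_first (hH : HypH P X ν R a) (hA : MeasurableSet A) {g : 𝕏 → ℝ≥0∞}
    (hg : Measurable g) : ∫⁻ ω in X 0 ⁻¹' A, g (X 0 ω) ∂P = ∫⁻ x in A, g x ∂ν := by
  rw [← hH.marginal 0, setLIntegral_map hA hg (hH.meas 0)]

theorem measure_first_mem_and_mem (hH : HypH P X ν R a) {n : ℕ} (hn : 1 ≤ n)
    (hA : MeasurableSet A) (hB : MeasurableSet B) :
    P {ω | X 0 ω ∈ A ∧ X n ω ∈ B} = ENNReal.ofReal (1 - a n) * ν A * ν B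
      + ENNReal.ofReal (a n) / n * ∑ i : Fin n, ∫⁻ ω in X 0 ⁻¹' A, R (X i ω) B ∂P := by
  have hX : Measurable fun ω (i : Fin n) => X i ω := measurable_pi_lambda _ fun i => hH.meas i
  have hRB : Measurable fun x => R x B := R.measurable_coe hB
  have hRX (i : Fin n) : Measurable fun ω => R (X i ω) B := hRB.comp (hH.meas i)
  have hA' : MeasurableSet ((fun x : Fin n → 𝕏 => x ⟨0, hn⟩) ⁻¹' A) := measurable_pi_apply _ hA
  rw [show {ω | X 0 ω ∈ A ∧ X n ω ∈ B}
      = {ω | (fun i : Fin n => X i ω) ∈ (fun x : Fin n → 𝕏 => x ⟨0, hn⟩) ⁻¹' A ∧ X n ω ∈ B} from rfl,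
    hH.pred n hn B hB _ hA', setLIntegral_map hA' (by fun_prop) hX,
    lintegral_add_left measurable_const, setLIntegral_const]
  beta_reduce
  rw [lintegral_const_mul _ (Finset.measurable_sum _ fun i _ => hRX i),
    lintegral_finsetSum _ fun i _ => hRX i]
  have : P (X 0 ⁻¹' A) = ν A := by rw [← hH.marginal 0, Measure.map_apply (hH.meas 0) hA]
  simp only [Set.preimage_preimage, this, mul_right_comm]

theorem measure_first_mem_and_one_mem (hH : HypH P X ν R a) (hA : MeasurableSet A)
    (hB : MeasurableSet B) :
    P {ω | X 0 ω ∈ A ∧ X 1 ω ∈ B} = ENNReal.ofReal (1 - a 1) * ν A * ν B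
      + ENNReal.ofReal (a 1) * ∫⁻ x in A, R x B ∂ν := by
  rw [hH.measure_first_mem_and_mem le_rfl hA hB, Fin.sum_univ_one, Fin.val_zero,
    hH.setLIntegral_comp_first hA (R.measurable_coe hB), Nat.cast_one, div_one]

theorem measure_first_mem_and_mem_eq_of_ne_zero (hH : HypH P X ν R a) {i : ℕ} (hi : i ≠ 0)
    (hA : MeasurableSet A) (hB : MeasurableSet B) :
    P {ω | X 0 ω ∈ A ∧ X i ω ∈ B} = P {ω | X 0 ω ∈ A ∧ X 1 ω ∈ B} := by
  have h := congrArg (· (A ×ˢ B)) (Exchangeable.map_pair_eq hH.exch hH.meas hi)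
  rwa [Measure.map_apply ((hH.meas 0).prodMk (hH.meas i)) (hA.prod hB),
    Measure.map_apply ((hH.meas 0).prodMk (hH.meas 1)) (hA.prod hB)] at h

theorem kernel_comp_eq (hH : HypH P X ν R a) : R ∘ₘ ν = ν := by
  have := hH.probν
  have ha := hH.a_mem 1 le_rfl
  ext B hB
  have h := hH.measure_first_mem_and_one_mem MeasurableSet.univ hB
  simp only [Set.mem_univ, true_and, measure_univ, mul_one, Measure.restrict_univ] at h
  change P (X 1 ⁻¹' B) = _ at h
  rw [← Measure.map_apply (hH.meas 1) hB, hH.marginal 1] at h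
  have hsplit : ν B = ENNReal.ofReal (1 - a 1) * ν B + ENNReal.ofReal (a 1) * ν B := by
    rw [← add_mul, ← ENNReal.ofReal_add (by linarith [ha.2]) ha.1.le, sub_add_cancel,
      ENNReal.ofReal_one, one_mul]
  rw [Measure.bind_apply hB R.measurable.aemeasurable]
  nth_rw 1 [hsplit] at h
  rw [ENNReal.add_right_inj (ENNReal.mul_ne_top ENNReal.ofReal_ne_top (measure_ne_top ν B)),
    ENNReal.mul_right_inj (by simpa using ha.1) ENNReal.ofReal_ne_top] at h
  exact h.symm

theorem map_restrict_first (hH : HypH P X ν R a) {i : ℕ} (hi : i ≠ 0) (hA : MeasurableSet A) :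
    (P.restrict (X 0 ⁻¹' A)).map (X i)
      = (ENNReal.ofReal (1 - a 1) * ν A) • ν + ENNReal.ofReal (a 1) • (R ∘ₘ ν.restrict A) := by
  ext B hB
  rw [Measure.map_apply (hH.meas i) hB, Measure.restrict_apply (hH.meas i hB), Set.inter_comm]
  change P {ω | X 0 ω ∈ A ∧ X i ω ∈ B} = _
  rw [hH.measure_first_mem_and_mem_eq_of_ne_zero hi hA hB, hH.measure_first_mem_and_one_mem hA hB,
    Measure.add_apply, Measure.smul_apply, Measure.smul_apply,
    Measure.bind_apply hB R.measurable.aemeasurable, smul_eq_mul, smul_eq_mul]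

theorem setLIntegral_kernel_of_ne_zero (hH : HypH P X ν R a) {i : ℕ} (hi : i ≠ 0)
    (hA : MeasurableSet A) (hB : MeasurableSet B) :
    ∫⁻ ω in X 0 ⁻¹' A, R (X i ω) B ∂P = ENNReal.ofReal (1 - a 1) * ν A * ν B
      + ENNReal.ofReal (a 1) * ∫⁻ x in A, (R ∘ₖ R) x B ∂ν := by
  have := hH.markov
  rw [← lintegral_map (R.measurable_coe hB) (hH.meas i), hH.map_restrict_first hi hA,
    ← Measure.bind_apply hB R.measurable.aemeasurable, Measure.comp_add, Measure.comp_smul,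
    Measure.comp_smul, hH.kernel_comp_eq, Measure.comp_assoc, Measure.add_apply, Measure.smul_apply,
    Measure.smul_apply, Measure.bind_apply hB (R ∘ₖ R).measurable.aemeasurable, smul_eq_mul,
    smul_eq_mul]

theorem measure_first_mem_and_succ_mem (hH : HypH P X ν R a) (m : ℕ) (hA : MeasurableSet A)
    (hB : MeasurableSet B) :
    P {ω | X 0 ω ∈ A ∧ X (m + 1) ω ∈ B} = ∫⁻ x in A, condProbGivenFirst ν R a m B x ∂ν := by
  have hRB : Measurable fun x => R x B := R.measurable_coe hB
  have hRRB : Measurable fun x => (R ∘ₖ R) x B := (R ∘ₖ R).measurable_coe hB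
  rw [hH.measure_first_mem_and_mem (by omega) hA hB, Fin.sum_univ_succ, Fin.val_zero,
    hH.setLIntegral_comp_first hA hRB]
  simp only [Fin.val_succ]
  rw [Finset.sum_congr rfl fun j _ => hH.setLIntegral_kernel_of_ne_zero (by omega) hA hB,
    Finset.sum_const, Finset.card_univ, Fintype.card_fin, nsmul_eq_mul]
  unfold condProbGivenFirst
  rw [lintegral_add_left measurable_const, setLIntegral_const, lintegral_const_mul _ (by fun_prop),
    lintegral_add_left hRB, lintegral_const_mul _ (by fun_prop), lintegral_add_left measurable_const,
    setLIntegral_const, lintegral_const_mul _ hRRB]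
  ring

theorem ae_condProbGivenFirst_eq (hH : HypH P X ν R a) (m : ℕ) (hB : MeasurableSet B) :
    ∀ᵐ x ∂ν, condProbGivenFirst ν R a m B x = condProbGivenFirst ν R a 0 B x := by
  have := hH.probν
  refine ae_eq_of_forall_setLIntegral_eq_of_sigmaFinite (measurable_condProbGivenFirst ν R a m hB)
    (measurable_condProbGivenFirst ν R a 0 hB) fun A hA _ => ?_
  rw [← hH.measure_first_mem_and_succ_mem m hA hB, ← hH.measure_first_mem_and_succ_mem 0 hA hB]
  exact hH.measure_first_mem_and_mem_eq_of_ne_zero m.succ_ne_zero hA hB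

theorem ae_linear_relation (hH : HypH P X ν R a) (m : ℕ) (hB : MeasurableSet B) :
    ∀ᵐ x ∂ν, (a (m + 1) - (m + 1) * a 1) * ((R x B).toReal - (ν B).toReal)
      + m * a (m + 1) * a 1 * (((R ∘ₖ R) x B).toReal - (ν B).toReal) = 0 := by
  have := hH.probν
  have := hH.markov
  obtain ⟨ha1, ha1'⟩ := hH.a_mem 1 le_rfl
  obtain ⟨ham, ham'⟩ := hH.a_mem (m + 1) (by omega)
  filter_upwards [hH.ae_condProbGivenFirst_eq m hB] with x hx
  have h := congrArg ENNReal.toReal hx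
  rw [toReal_condProbGivenFirst ham.le ham'.le ha1.le ha1'.le,
    toReal_condProbGivenFirst ha1.le ha1'.le ha1.le ha1'.le] at h
  field_simp at h
  linear_combination h

theorem ae_coeff_mul_sub_eq_zero (hH : HypH P X ν R a) {n : ℕ} (hn : 1 ≤ n)
    (hB : MeasurableSet B) :
    ∀ᵐ x ∂ν, ((n : ℝ) * a (n + 1) - (n + 1 : ℝ) * a n
      + (1 - (a 2 - 2 * a 1 + a 1 * a 2) / (a 1 * a 2)) * a n * a (n + 1))
        * ((R x B).toReal - (ν B).toReal) = 0 := by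
  obtain ⟨m, rfl⟩ : ∃ m, n = m + 1 := ⟨n - 1, by omega⟩
  have ha1 := (hH.a_mem 1 le_rfl).1.ne'
  have ha2 := (hH.a_mem 2 (by norm_num)).1.ne'
  have hc : (1 - (a 2 - 2 * a 1 + a 1 * a 2) / (a 1 * a 2)) * (a 1 * a 2) = 2 * a 1 - a 2 := by
    field_simp
    ring
  filter_upwards [hH.ae_linear_relation 1 hB, hH.ae_linear_relation m hB,
    hH.ae_linear_relation (m + 1) hB] with x htwo hcur hsucc
  norm_num at htwo
  push_cast at hsucc ⊢
  refine (mul_left_injective₀ (mul_ne_zero ha1 ha2)).eq_iff.1 ?_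
  linear_combination (a (m + 1) * a (m + 1 + 1) * ((R x B).toReal - (ν B).toReal)) * hc
    + a (m + 1) * a 2 * hsucc - a (m + 1) * (m + 1) * a (m + 1 + 1) * htwo
    - a (m + 1 + 1) * a 2 * hcur + a (m + 1 + 1) * m * a (m + 1) * htwo

end HypH

/-- under Hypothesis (H), with `c* = (a₂ - 2a₁ + a₁a₂)/(a₁a₂)`,
for every `n ≥ 2` and ν-a.e. `x`:
`(n a_{n+1} - (n+1) a_n + (1-c*) a_n a_{n+1}) ν(B) = (n a_{n+1} - (n+1) a_n + (1-c*) a_n a_{n+1}) R_x(B)`. -/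
theorem coefficient_identity {Ω 𝕏 : Type*} [MeasurableSpace Ω] [MeasurableSpace 𝕏]
    [StandardBorelSpace 𝕏]
    (P : Measure Ω) (X : ℕ → Ω → 𝕏) (ν : Measure 𝕏) (R : Kernel 𝕏 𝕏) (a : ℕ → ℝ)
    (hH : HypH P X ν R a) :
    ∀ n : ℕ, 2 ≤ n → ∀ᵐ x ∂ν, ∀ B : Set 𝕏, MeasurableSet B →
      ((n : ℝ) * a (n + 1) - (n + 1 : ℝ) * a n
          + (1 - (a 2 - 2 * a 1 + a 1 * a 2) / (a 1 * a 2)) * a n * a (n + 1)) * (ν B).toReal =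
        ((n : ℝ) * a (n + 1) - (n + 1 : ℝ) * a n
          + (1 - (a 2 - 2 * a 1 + a 1 * a 2) / (a 1 * a 2)) * a n * a (n + 1)) * (R x B).toReal := by
  have := hH.probν
  have := hH.markov
  intro n hn
  set C := (n : ℝ) * a (n + 1) - (n + 1 : ℝ) * a n
    + (1 - (a 2 - 2 * a 1 + a 1 * a 2) / (a 1 * a 2)) * a n * a (n + 1)
  obtain hC | hC := eq_or_ne C 0
  · exact ae_of_all _ fun x B _ => by rw [hC, zero_mul, zero_mul]
  have hR (B : Set 𝕏) (hB : MeasurableSet B) : ∀ᵐ x ∂ν, R x B = Kernel.const 𝕏 ν x B := by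
    filter_upwards [hH.ae_coeff_mul_sub_eq_zero (by omega : 1 ≤ n) hB] with x hx
    rw [Kernel.const_apply, ← ENNReal.toReal_eq_toReal_iff' (measure_ne_top _ _)
      (measure_ne_top _ _), ← sub_eq_zero]
    exact (mul_eq_zero.1 hx).resolve_left hC
  filter_upwards [Kernel.ae_eq_of_forall_ae_apply_eq hR] with x hx B _
  rw [hx, Kernel.const_apply]
end

section
/- Suppose Hypothesis (H) holds and set c* := (a_2 − 2a_1 + a_1a_2)/(a_1a_2). If ν({x ∈ 𝕏 : R_x ≠ ν}) > 0, then c* ≤ 0 and a_n = n/((n−1)(1−c*) + a_1^{-1}) for every n ≥ 1. -/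
open MeasureTheory ProbabilityTheory ENNReal

/-!
Exchangeability makes the law of `(X 0, X i)` the same for every `i ≥ 1`, and the predictive rule
for `X 1` identifies it as `(1 - a 1) • ν ⊗ ν + a 1 • ν ⊗ₘ R`; comparing second marginals shows
that `ν` is `R`-invariant. Evaluating the predictive rule for `X n` on a rectangle `B₀ × B` then
gives, for every `n ≥ 1`, a linear relation between `a n`, `a 1` and the three numbers
`C = ν B₀ * ν B`, `I = (ν ⊗ₘ R) (B₀ × B)` and `J = (ν ⊗ₘ (R ∘ₖ R)) (B₀ × B)`. On a standard Borel
space a kernel is determined `ν`-a.e. by `ν ⊗ₘ R`, so if `R x ≠ ν` on a non-null set some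
rectangle has `I ≠ C`. Eliminating `J` with the relation for `n = 2` and dividing by `I - C`
leaves `a n * (a 2 + (n - 1) * (2 * a 1 - a 2)) = n * a 1 * a 2`, which is the formula; and
`a n < 1` for all `n` forces the numerator `a 2 - 2 * a 1 + a 1 * a 2` of `c*` to be `≤ 0`.
-/

section

variable {Ω 𝕏 : Type*} [MeasurableSpace Ω] [MeasurableSpace 𝕏]

lemma MeasureTheory.Measure.map_compProd_apply_prod {P : Measure Ω} [IsFiniteMeasure P]
    {Y : Ω → 𝕏} (hY : Measurable Y) (R : Kernel 𝕏 𝕏) [IsSFiniteKernel R] {s t : Set 𝕏}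
    (hs : MeasurableSet s) (ht : MeasurableSet t) :
    (P.map Y ⊗ₘ R) (s ×ˢ t) = ∫⁻ ω in Y ⁻¹' s, R (Y ω) t ∂P := by
  rw [Measure.compProd_apply_prod hs ht, setLIntegral_map hs (R.measurable_coe ht) hY]

lemma MeasureTheory.Measure.compProd_comp_apply_prod {α β γ : Type*} [MeasurableSpace α]
    [MeasurableSpace β] [MeasurableSpace γ] (μ : Measure α) [SFinite μ] (κ : Kernel α β)
    [IsSFiniteKernel κ] (η : Kernel β γ) [IsSFiniteKernel η] {s : Set α} {t : Set γ}
    (hs : MeasurableSet s) (ht : MeasurableSet t) :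
    (μ ⊗ₘ (η ∘ₖ κ)) (s ×ˢ t) = ∫⁻ p in s ×ˢ Set.univ, η p.2 t ∂(μ ⊗ₘ κ) := by
  rw [Measure.compProd_apply_prod hs ht, Measure.setLIntegral_compProd (f := fun p => η p.2 t)
    ((η.measurable_coe ht).comp measurable_snd) hs .univ]
  simp [Kernel.comp_apply' _ _ _ ht]

lemma setLIntegral_kernel_of_map_pair_eq {P : Measure Ω} {ν : Measure 𝕏} [SFinite ν]
    {R : Kernel 𝕏 𝕏} [IsSFiniteKernel R] {Y Z : Ω → 𝕏} (hY : Measurable Y) (hZ : Measurable Z)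
    {c d : ℝ≥0∞} (hYZ : P.map (fun ω => (Y ω, Z ω)) = c • ν.prod ν + d • ν ⊗ₘ R)
    (hinv : R ∘ₘ ν = ν) {B₀ B : Set 𝕏} (hB₀ : MeasurableSet B₀) (hB : MeasurableSet B) :
    ∫⁻ ω in Y ⁻¹' B₀, R (Z ω) B ∂P = c * (ν B₀ * ν B) + d * (ν ⊗ₘ (R ∘ₖ R)) (B₀ ×ˢ B) := by
  have hconst : (ν ⊗ₘ (R ∘ₖ Kernel.const 𝕏 ν)) (B₀ ×ˢ B) = ν B₀ * ν B := by
    rw [Kernel.comp_const, hinv, Measure.compProd_const, Measure.prod_prod]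
  have hpre : Y ⁻¹' B₀ = (fun ω => (Y ω, Z ω)) ⁻¹' (B₀ ×ˢ Set.univ) := by ext; simp
  have hR : Measurable fun p : 𝕏 × 𝕏 => R p.2 B := (R.measurable_coe hB).comp measurable_snd
  rw [hpre, ← setLIntegral_map (hB₀.prod .univ) hR (hY.prodMk hZ), hYZ, Measure.restrict_add,
    lintegral_add_measure, Measure.restrict_smul, Measure.restrict_smul, lintegral_smul_measure,
    lintegral_smul_measure, ← Measure.compProd_comp_apply_prod _ _ _ hB₀ hB,
    ← Measure.compProd_const, ← Measure.compProd_comp_apply_prod _ _ _ hB₀ hB, hconst,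
    smul_eq_mul, smul_eq_mul]

lemma exists_compProd_real_prod_ne [MeasurableSpace.CountablyGenerated 𝕏] {ν : Measure 𝕏}
    [IsFiniteMeasure ν] {R : Kernel 𝕏 𝕏} [IsFiniteKernel R] (h : 0 < ν {x | R x ≠ ν}) :
    ∃ B₀ B, MeasurableSet B₀ ∧ MeasurableSet B ∧
      (ν ⊗ₘ R).real (B₀ ×ˢ B) ≠ ν.real B₀ * ν.real B := by
  by_contra! hcon
  have hprod : ν ⊗ₘ R = ν ⊗ₘ Kernel.const 𝕏 ν := by
    rw [Measure.compProd_const]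
    refine Measure.ext_prod fun hs ht => ?_
    rw [Measure.prod_prod, ← ENNReal.toReal_eq_toReal_iff' (by finiteness) (by finiteness),
      ENNReal.toReal_mul]
    exact hcon _ _ hs ht
  exact h.ne' (Kernel.ae_eq_of_compProd_eq hprod)

lemma Exchangeable.map_zero_pair_eq {P : Measure Ω} {X : ℕ → Ω → 𝕏}
    (hX : ∀ n, Measurable (X n)) (h : Exchangeable P X) {i : ℕ} (hi : i ≠ 0) :
    P.map (fun ω => (X 0 ω, X i ω)) = P.map (fun ω => (X 0 ω, X 1 ω)) := by
  have h1 : 1 < i + 1 := by omega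
  let σ : Equiv.Perm (Fin (i + 1)) := Equiv.swap ⟨1, h1⟩ (Fin.last i)
  have hσ0 : σ 0 = 0 :=
    Equiv.swap_apply_of_ne_of_ne (by simp [Fin.ext_iff]) (by simp [Fin.ext_iff]; omega)
  let g : (Fin (i + 1) → 𝕏) → 𝕏 × 𝕏 := fun x => (x 0, x (Fin.last i))
  have := congrArg (Measure.map g) (h (i + 1) σ)
  rw [Measure.map_map (by fun_prop) (by fun_prop), Measure.map_map (by fun_prop) (by fun_prop)]
    at this
  convert this.symm using 2 <;> funext ω <;> simp [g, σ, hσ0]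

end

namespace PredEq

variable {Ω 𝕏 : Type*} [MeasurableSpace Ω] [MeasurableSpace 𝕏] {P : Measure Ω}
  {X : ℕ → Ω → 𝕏} {ν : Measure 𝕏} {R : Kernel 𝕏 𝕏} {a : ℕ → ℝ}

lemma map_pair_apply_prod (hpred : PredEq P X ν R a) (hX : ∀ n, Measurable (X n))
    (h0 : P.map (X 0) = ν) (m : ℕ) {B₀ B : Set 𝕏} (hB₀ : MeasurableSet B₀)
    (hB : MeasurableSet B) :
    P.map (fun ω => (X 0 ω, X (m + 1) ω)) (B₀ ×ˢ B) =
      ENNReal.ofReal (1 - a (m + 1)) * (ν B₀ * ν B) + ENNReal.ofReal (a (m + 1)) / (m + 1 : ℕ) *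
        ∑ i : Fin (m + 1), ∫⁻ ω in X 0 ⁻¹' B₀, R (X i ω) B ∂P := by
  have hY : Measurable fun ω (i : Fin (m + 1)) => X i ω := by fun_prop
  have hA : MeasurableSet {x : Fin (m + 1) → 𝕏 | x 0 ∈ B₀} := measurable_pi_apply 0 hB₀
  have hpre : (fun ω (i : Fin (m + 1)) => X i ω) ⁻¹' {x | x 0 ∈ B₀} = X 0 ⁻¹' B₀ := rfl
  have hRX (i : Fin (m + 1)) : Measurable fun ω => R (X i ω) B :=
    (R.measurable_coe hB).comp (hX i)
  have hsum : Measurable fun x : Fin (m + 1) → 𝕏 => ∑ i, R (x i) B :=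
    Finset.measurable_sum _ fun i _ => (R.measurable_coe hB).comp (measurable_pi_apply i)
  rw [Measure.map_apply (by fun_prop) (hB₀.prod hB)]
  refine (hpred (m + 1) (by omega) B hB _ hA).trans ?_
  rw [setLIntegral_map hA ((hsum.const_mul _).const_add _) hY, hpre,
    lintegral_add_left measurable_const, setLIntegral_const,
    lintegral_const_mul _ (Finset.measurable_sum _ fun i _ => hRX i),
    lintegral_finsetSum _ fun i _ => hRX i, ← Measure.map_apply (hX 0) hB₀, h0]
  ring

lemma map_pair_zero_one [IsFiniteMeasure P] [SFinite ν] [IsSFiniteKernel R]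
    (hpred : PredEq P X ν R a) (hX : ∀ n, Measurable (X n)) (h0 : P.map (X 0) = ν) :
    P.map (fun ω => (X 0 ω, X 1 ω)) =
      ENNReal.ofReal (1 - a 1) • ν.prod ν + ENNReal.ofReal (a 1) • ν ⊗ₘ R := by
  refine Measure.ext_prod fun {s t} hs ht => ?_
  have hI : (ν ⊗ₘ R) (s ×ˢ t) = ∫⁻ ω in X 0 ⁻¹' s, R (X 0 ω) t ∂P :=
    h0 ▸ Measure.map_compProd_apply_prod (hX 0) R hs ht
  simp [hpred.map_pair_apply_prod hX h0 0 hs ht, hI]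

lemma kernel_comp_eq_self [IsFiniteMeasure P] [IsProbabilityMeasure ν] [IsSFiniteKernel R]
    (hpred : PredEq P X ν R a) (hX : ∀ n, Measurable (X n)) (h0 : P.map (X 0) = ν)
    (h1 : P.map (X 1) = ν) (ha : a 1 ∈ Set.Ioo 0 1) :
    R ∘ₘ ν = ν := by
  ext B hB
  have h := congrArg (· (Set.univ ×ˢ B)) (hpred.map_pair_zero_one hX h0)
  simp only [Measure.map_apply (by fun_prop : Measurable fun ω => (X 0 ω, X 1 ω))
    (MeasurableSet.univ.prod hB), Measure.add_apply, Measure.smul_apply, smul_eq_mul,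
    Measure.prod_prod, measure_univ, one_mul, Measure.compProd_apply_prod MeasurableSet.univ hB,
    Measure.restrict_univ, Set.mk_preimage_prod, Set.preimage_univ, Set.univ_inter,
    ← Measure.map_apply (hX 1) hB, h1] at h
  have hsplit : ν B = ENNReal.ofReal (1 - a 1) * ν B + ENNReal.ofReal (a 1) * ν B := by
    rw [← add_mul, ← ENNReal.ofReal_add (by linarith [ha.2]) ha.1.le]
    simp
  rw [Measure.bind_apply hB R.aemeasurable]
  exact (ENNReal.mul_right_inj (by simpa using ha.1) ENNReal.ofReal_ne_top).mp
    ((ENNReal.add_right_inj (by finiteness)).mp (h.symm.trans hsplit))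

end PredEq

namespace HypH

variable {Ω 𝕏 : Type*} [MeasurableSpace Ω] [MeasurableSpace 𝕏] {P : Measure Ω}
  {X : ℕ → Ω → 𝕏} {ν : Measure 𝕏} {R : Kernel 𝕏 𝕏} {a : ℕ → ℝ}

lemma rectangle_eq (hH : HypH P X ν R a) (m : ℕ) {B₀ B : Set 𝕏} (hB₀ : MeasurableSet B₀)
    (hB : MeasurableSet B) :
    ENNReal.ofReal (1 - a 1) * (ν B₀ * ν B) + ENNReal.ofReal (a 1) * (ν ⊗ₘ R) (B₀ ×ˢ B) =
      ENNReal.ofReal (1 - a (m + 1)) * (ν B₀ * ν B) + ENNReal.ofReal (a (m + 1)) / (m + 1 : ℕ) *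
        ((ν ⊗ₘ R) (B₀ ×ˢ B) + m * (ENNReal.ofReal (1 - a 1) * (ν B₀ * ν B) +
          ENNReal.ofReal (a 1) * (ν ⊗ₘ (R ∘ₖ R)) (B₀ ×ˢ B))) := by
  obtain ⟨hP, hν, hR, hX, hexch, hmarg, ha, hpred⟩ := hH
  have hpair : ∀ i ≠ 0, P.map (fun ω => (X 0 ω, X i ω)) =
      ENNReal.ofReal (1 - a 1) • ν.prod ν + ENNReal.ofReal (a 1) • ν ⊗ₘ R := fun i hi =>
    (hexch.map_zero_pair_eq hX hi).trans (hpred.map_pair_zero_one hX (hmarg 0))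
  have hinv := hpred.kernel_comp_eq_self hX (hmarg 0) (hmarg 1) (ha 1 le_rfl)
  have hdiag : ∫⁻ ω in X 0 ⁻¹' B₀, R (X 0 ω) B ∂P = (ν ⊗ₘ R) (B₀ ×ˢ B) :=
    (hmarg 0 ▸ Measure.map_compProd_apply_prod (hX 0) R hB₀ hB).symm
  have hoff (j : Fin m) := setLIntegral_kernel_of_map_pair_eq (hX 0) (hX (j + 1))
    (hpair (j + 1) j.val.succ_ne_zero) hinv hB₀ hB
  have h := hpred.map_pair_apply_prod hX (hmarg 0) m hB₀ hB
  rw [hpair (m + 1) (by omega), Fin.sum_univ_succ] at h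
  simpa only [Fin.val_zero, hdiag, Fin.val_succ, hoff, Finset.sum_const, Finset.card_univ,
    Fintype.card_fin, nsmul_eq_mul, Measure.add_apply, Measure.smul_apply, smul_eq_mul,
    Measure.prod_prod] using h

lemma rectangle_eq_real (hH : HypH P X ν R a) (m : ℕ) {B₀ B : Set 𝕏}
    (hB₀ : MeasurableSet B₀) (hB : MeasurableSet B) :
    (1 - a 1) * (ν.real B₀ * ν.real B) + a 1 * (ν ⊗ₘ R).real (B₀ ×ˢ B) =
      (1 - a (m + 1)) * (ν.real B₀ * ν.real B) + a (m + 1) / (m + 1) *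
        ((ν ⊗ₘ R).real (B₀ ×ˢ B) + m * ((1 - a 1) * (ν.real B₀ * ν.real B) +
          a 1 * (ν ⊗ₘ (R ∘ₖ R)).real (B₀ ×ˢ B))) := by
  have := hH.probν
  have := hH.markov
  obtain ⟨ha₁, ha₁'⟩ := hH.a_mem 1 le_rfl
  obtain ⟨ha, ha'⟩ := hH.a_mem (m + 1) (by omega)
  have h := congrArg ENNReal.toReal (hH.rectangle_eq m hB₀ hB)
  simp (disch := finiteness) only [ENNReal.toReal_add, ENNReal.toReal_mul, ENNReal.toReal_div,
    ENNReal.toReal_ofReal (sub_nonneg.2 ha₁'.le), ENNReal.toReal_ofReal (sub_nonneg.2 ha'.le),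
    ENNReal.toReal_ofReal ha₁.le, ENNReal.toReal_ofReal ha.le, ENNReal.toReal_natCast] at h
  simpa [measureReal_def] using h

end HypH

lemma coeff_mul_eq_of_rectangle_eq {a : ℕ → ℝ} {C I J : ℝ} (hIC : I ≠ C)
    (h : ∀ m : ℕ, (1 - a 1) * C + a 1 * I =
      (1 - a (m + 1)) * C + a (m + 1) / (m + 1) * (I + m * ((1 - a 1) * C + a 1 * J)))
    (m : ℕ) :
    a (m + 1) * (a 2 + m * (2 * a 1 - a 2)) = (m + 1) * a 1 * a 2 := by
  have hm (k : ℕ) : (k + 1) * a 1 * (I - C) = a (k + 1) * (I - C + k * a 1 * (J - C)) := by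
    have := h k
    field_simp at this
    linear_combination this
  have h2 := hm 1
  norm_num at h2
  refine mul_right_cancel₀ (sub_ne_zero.2 hIC) ?_
  linear_combination (a (m + 1) * m) * h2 - a 2 * hm m

lemma coeff_formula_of_mul_eq {a : ℕ → ℝ} (ha : ∀ n, 1 ≤ n → a n ∈ Set.Ioo 0 1)
    (h : ∀ m : ℕ, a (m + 1) * (a 2 + m * (2 * a 1 - a 2)) = (m + 1) * a 1 * a 2) :
    (a 2 - 2 * a 1 + a 1 * a 2) / (a 1 * a 2) ≤ 0 ∧
      ∀ n : ℕ, 1 ≤ n →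
        a n = n / (((n : ℝ) - 1) * (1 - (a 2 - 2 * a 1 + a 1 * a 2) / (a 1 * a 2)) + (a 1)⁻¹) := by
  obtain ⟨ha₁, ha₁'⟩ := ha 1 le_rfl
  obtain ⟨ha₂, -⟩ := ha 2 (by norm_num)
  have hbracket (m : ℕ) : (m + 1) * a 1 * a 2 < a 2 + m * (2 * a 1 - a 2) := by
    obtain ⟨h₀, h₁⟩ := ha (m + 1) (by omega)
    have hpos : 0 < a 2 + m * (2 * a 1 - a 2) :=
      pos_of_mul_pos_right (h m ▸ by positivity) h₀.le
    nlinarith [h m]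
  constructor
  · refine div_nonpos_of_nonpos_of_nonneg (not_lt.1 fun hk => ?_) (by positivity)
    obtain ⟨m, hm⟩ := exists_nat_gt (a 2 * (1 - a 1) / (a 2 - 2 * a 1 + a 1 * a 2))
    rw [div_lt_iff₀ hk] at hm
    nlinarith [hbracket m]
  · intro n hn
    obtain ⟨m, rfl⟩ := Nat.exists_eq_add_of_le' hn
    have hpos : 0 < a 2 + m * (2 * a 1 - a 2) := (hbracket m).trans' (by positivity)
    have hden : (m : ℝ) * (1 - (a 2 - 2 * a 1 + a 1 * a 2) / (a 1 * a 2)) + (a 1)⁻¹ =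
        (a 2 + m * (2 * a 1 - a 2)) / (a 1 * a 2) := by
      field_simp
      ring
    push_cast
    rw [add_sub_cancel_right, hden, div_div_eq_mul_div, eq_div_iff hpos.ne']
    linear_combination h m

/-- under Hypothesis (H), if `ν({x : R_x ≠ ν}) > 0` then `c* ≤ 0`
and `a_n = n/((n-1)(1-c*) + a₁⁻¹)`. -/
theorem coefficients_formula_of_nontrivial {Ω 𝕏 : Type*} [MeasurableSpace Ω] [MeasurableSpace 𝕏]
    [StandardBorelSpace 𝕏]
    (P : Measure Ω) (X : ℕ → Ω → 𝕏) (ν : Measure 𝕏) (R : Kernel 𝕏 𝕏) (a : ℕ → ℝ)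
    (hH : HypH P X ν R a)
    (hD : 0 < ν {x | (R x : Measure 𝕏) ≠ ν}) :
    (a 2 - 2 * a 1 + a 1 * a 2) / (a 1 * a 2) ≤ 0 ∧
      ∀ n : ℕ, 1 ≤ n →
        a n = n / (((n : ℝ) - 1) * (1 - (a 2 - 2 * a 1 + a 1 * a 2) / (a 1 * a 2)) + (a 1)⁻¹) := by
  have := hH.probν
  have := hH.markov
  obtain ⟨B₀, B, hB₀, hB, hne⟩ := exists_compProd_real_prod_ne hD
  exact coeff_formula_of_mul_eq hH.a_mem
    (coeff_mul_eq_of_rectangle_eq hne fun m => hH.rectangle_eq_real m hB₀ hB)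
end

section
/- Let ν be a probability measure on a standard Borel space (𝕏, 𝒳) and let R be a probability kernel on 𝕏 such that ∫_𝕏 R_x(B) ν(dx) = ν(B) for every B ∈ 𝒳. Then for every G ∈ 𝒳 with ν(G) = 1 there exists a measurable set G* ⊆ G with ν(G*) = 1 and R_x(G*) = 1 for every x ∈ G*. -/
open MeasureTheory ProbabilityTheory ENNReal

/-- if `ν` is invariant for a probability kernel `R`, then every
measurable set `G` of full `ν`-measure contains a measurable `G*` of full `ν`-measure
which is a.s. absorbing: `R_x(G*) = 1` for every `x ∈ G*`. -/
theorem exists_absorbing_full_subset {𝕏 : Type*} [MeasurableSpace 𝕏] [StandardBorelSpace 𝕏]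
    (ν : Measure 𝕏) [IsProbabilityMeasure ν] (R : Kernel 𝕏 𝕏) [IsMarkovKernel R]
    (hinv : ∀ B : Set 𝕏, MeasurableSet B → ∫⁻ x, R x B ∂ν = ν B) :
    ∀ G : Set 𝕏, MeasurableSet G → ν G = 1 →
      ∃ Gstar : Set 𝕏, Gstar ⊆ G ∧ MeasurableSet Gstar ∧ ν Gstar = 1 ∧
        ∀ x ∈ Gstar, R x Gstar = 1 := by
  intro G hG hGfull
  -- iterate: S ↦ S ∩ {x | R x S = 1}
  set F : ℕ → Set 𝕏 := fun n => Nat.rec G (fun _ s => s ∩ {x | R x s = 1}) n with hF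
  have hFsucc : ∀ n, F (n + 1) = F n ∩ {x | R x (F n) = 1} := fun n => rfl
  have hFm : ∀ n, MeasurableSet (F n) := by
    intro n
    induction n with
    | zero => exact hG
    | succ n ih =>
      rw [hFsucc]
      exact ih.inter ((R.measurable_coe ih) (measurableSet_singleton 1))
  -- full measure step
  have key : ∀ n, ν (F n) = 1 → ν (F (n + 1)) = 1 := by
    intro n hn
    have hmeas := hFm n
    have hint : ∫⁻ x, R x (F n) ∂ν = 1 := by rw [hinv _ hmeas, hn]
    have hle : ∀ x, R x (F n) ≤ 1 := fun x => prob_le_one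
    have hfm : Measurable fun x => R x (F n) := R.measurable_coe hmeas
    have hsub : ∫⁻ x, (1 - R x (F n)) ∂ν = 0 := by
      rw [lintegral_sub hfm (by rw [hint]; exact one_ne_top)
        (Filter.Eventually.of_forall hle), hint, lintegral_one, measure_univ, tsub_self]
    have hae : (fun x => (1 : ℝ≥0∞) - R x (F n)) =ᵐ[ν] 0 :=
      (lintegral_eq_zero_iff (measurable_const.sub hfm)).mp hsub
    have hae' : ∀ᵐ x ∂ν, R x (F n) = 1 := by
      filter_upwards [hae] with x hx
      exact le_antisymm (hle x) (tsub_eq_zero_iff_le.mp hx)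
    rw [hFsucc]
    rw [measure_inter_conull ?_]
    · exact hn
    · have : {x | R x (F n) = 1}ᶜ = {x | ¬ R x (F n) = 1} := rfl
      rw [this, ← ae_iff]
      exact hae'
  have hFfull : ∀ n, ν (F n) = 1 := by
    intro n
    induction n with
    | zero => exact hGfull
    | succ n ih => exact key n ih
  have hanti : Antitone F := by
    apply antitone_nat_of_succ_le
    intro n
    rw [hFsucc]
    exact Set.inter_subset_left
  refine ⟨⋂ n, F n, Set.iInter_subset F 0, MeasurableSet.iInter (fun n => hFm n), ?_, ?_⟩
  · rw [hanti.measure_iInter (fun n => (hFm n).nullMeasurableSet)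
      ⟨0, by rw [hFfull 0]; exact one_ne_top⟩]
    simp [hFfull]
  · intro x hx
    have hmem : ∀ n, x ∈ F n := fun n => Set.mem_iInter.mp hx n
    have hRn : ∀ n, R x (F n) = 1 := by
      intro n
      have := hmem (n + 1)
      rw [hFsucc] at this
      exact this.2
    rw [hanti.measure_iInter (fun n => (hFm n).nullMeasurableSet)
      ⟨0, by rw [hRn 0]; exact one_ne_top⟩]
    simp [hRn]
end

section
/- Suppose Hypothesis (H) holds. Then for every n ≥ 1, the joint distribution of (X_1,…,X_n) dominates a multiple of the product measure: for every measurable A ⊆ 𝕏^n, ℙ((X_1,…,X_n) ∈ A) ≥ (∏_{i=1}^{n−1}(1 − a_i)) · ν^{⊗n}(A), where ν^{⊗n} denotes the n-fold product of ν. -/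
/-!
Write `μₙ` for the law of `(X_1,…,X_n)`. The predictive hypothesis says that the law of
`((X_1,…,X_n), X_{n+1})` is the composition product of `μₙ` with the kernel
`x ↦ (1 - a_n) ν + (a_n / n) ∑ᵢ R_{xᵢ}`. Dropping the second summand of this kernel gives
`μₙ₊₁ ≥ (1 - a_n) μₙ ⊗ ν`, and induction from `μ₁ = ν` yields the bound.
-/

open MeasureTheory ProbabilityTheory ENNReal

namespace MeasureTheory.Measure

variable {α β : Type*} [MeasurableSpace α] [MeasurableSpace β]

theorem smul_prod_le_compProd {μ μ' : Measure α} [SFinite μ] [SFinite μ'] {ν : Measure β}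
    [SFinite ν] {κ : Kernel α β} [IsSFiniteKernel κ] {c d : ℝ≥0∞} (hμ : c • μ' ≤ μ)
    (hκ : ∀ x, d • ν ≤ κ x) : (c * d) • μ'.prod ν ≤ μ ⊗ₘ κ := by
  refine Measure.le_iff.2 fun s hs => ?_
  rw [smul_apply, smul_eq_mul, prod_apply hs, compProd_apply hs]
  calc c * d * ∫⁻ x, ν (Prod.mk x ⁻¹' s) ∂μ'
      = ∫⁻ x, d * ν (Prod.mk x ⁻¹' s) ∂(c • μ') := by
        rw [lintegral_smul_measure, lintegral_const_mul _ (measurable_measure_prodMk_left hs),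
          mul_assoc, smul_eq_mul]
    _ ≤ ∫⁻ x, d * ν (Prod.mk x ⁻¹' s) ∂μ := lintegral_mono' hμ le_rfl
    _ ≤ ∫⁻ x, κ x (Prod.mk x ⁻¹' s) ∂μ := lintegral_mono fun x => hκ x _

end MeasureTheory.Measure

section Snoc

variable {𝕏 : Type*} [MeasurableSpace 𝕏]

theorem measurable_snoc (n : ℕ) :
    Measurable fun p : (Fin n → 𝕏) × 𝕏 => (Fin.snoc p.1 p.2 : Fin (n + 1) → 𝕏) := by
  refine measurable_pi_lambda _ fun i => ?_
  cases i using Fin.lastCases with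
  | last => simpa using measurable_snd
  | cast j => simpa using measurable_fst.eval (a := j)

theorem map_snoc_prod_pi (ν : Measure 𝕏) [SigmaFinite ν] (n : ℕ) :
    ((Measure.pi fun _ : Fin n => ν).prod ν).map (fun p => (Fin.snoc p.1 p.2 : Fin (n + 1) → 𝕏))
      = Measure.pi fun _ => ν := by
  refine (Measure.pi_eq fun s hs => ?_).symm
  have hpre : (fun p : (Fin n → 𝕏) × 𝕏 => (Fin.snoc p.1 p.2 : Fin (n + 1) → 𝕏)) ⁻¹'
      Set.univ.pi s = Set.univ.pi (fun j => s (Fin.castSucc j)) ×ˢ s (Fin.last n) := by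
    ext p
    simp [Fin.forall_fin_succ']
  rw [Measure.map_apply (measurable_snoc n) (.univ_pi hs), hpre, Measure.prod_prod,
    Measure.pi_pi, Fin.prod_univ_castSucc]

end Snoc

section Predictive

variable {𝕏 : Type*} [MeasurableSpace 𝕏]

noncomputable def predictiveKernel (ν : Measure 𝕏) (R : Kernel 𝕏 𝕏) (a : ℕ → ℝ) (n : ℕ) :
    Kernel (Fin n → 𝕏) 𝕏 where
  toFun x := ENNReal.ofReal (1 - a n) • ν + (ENNReal.ofReal (a n) / n) • ∑ i, R (x i)
  measurable' := by
    refine Measure.measurable_of_measurable_coe _ fun B hB => ?_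
    simp only [Measure.add_apply, Measure.smul_apply, smul_eq_mul, Measure.finsetSum_apply]
    exact measurable_const.add ((Finset.measurable_sum _ fun i _ =>
      (R.measurable_coe hB).comp (measurable_pi_apply i)).const_mul _)

variable {ν : Measure 𝕏} {R : Kernel 𝕏 𝕏} {a : ℕ → ℝ} {n : ℕ}

theorem predictiveKernel_apply (x : Fin n → 𝕏) (B : Set 𝕏) :
    predictiveKernel ν R a n x B =
      ENNReal.ofReal (1 - a n) * ν B + (ENNReal.ofReal (a n) / n) * ∑ i, R (x i) B := by
  simp [predictiveKernel]

theorem smul_le_predictiveKernel (x : Fin n → 𝕏) :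
    ENNReal.ofReal (1 - a n) • ν ≤ predictiveKernel ν R a n x :=
  Measure.le_add_right le_rfl

instance [IsFiniteMeasure ν] [IsFiniteKernel R] : IsFiniteKernel (predictiveKernel ν R a n) := by
  refine ⟨⟨ENNReal.ofReal (1 - a n) * ν Set.univ + ENNReal.ofReal (a n) * R.bound,
    by finiteness [R.bound_ne_top], fun x => ?_⟩⟩
  rw [predictiveKernel_apply]
  refine add_le_add le_rfl ?_
  calc ENNReal.ofReal (a n) / n * ∑ i, R (x i) Set.univ
      ≤ ENNReal.ofReal (a n) / n * ∑ _ : Fin n, R.bound := by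
        gcongr with i
        exact R.measure_le_bound (x i) _
    _ = n * (ENNReal.ofReal (a n) / n) * R.bound := by
        simp only [Finset.sum_const, Finset.card_univ, Fintype.card_fin, nsmul_eq_mul]
        ring
    _ ≤ ENNReal.ofReal (a n) * R.bound := by
        gcongr
        exact ENNReal.mul_div_le

end Predictive

section JointLaw

variable {Ω 𝕏 : Type*} [MeasurableSpace Ω] [MeasurableSpace 𝕏] {P : Measure Ω} {X : ℕ → Ω → 𝕏}

theorem measurable_prefix (hX : ∀ k, Measurable (X k)) (n : ℕ) :
    Measurable fun ω (i : Fin n) => X i ω :=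
  measurable_pi_lambda _ fun i => hX i

theorem map_prefix_one (hX : Measurable (X 0)) :
    P.map (fun ω (i : Fin 1) => X i ω) = Measure.pi fun _ => P.map (X 0) := by
  refine Eq.trans ?_ (measurePreserving_funUnique (P.map (X 0)) (Fin 1)).symm.map_eq
  rw [Measure.map_map (MeasurableEquiv.measurable _) hX]
  congr 1
  funext ω i
  simp [Fin.fin_one_eq_zero i]

theorem map_prefix_succ (hX : ∀ k, Measurable (X k)) (n : ℕ) :
    P.map (fun ω (i : Fin (n + 1)) => X i ω) =
      (P.map fun ω => ((fun i : Fin n => X i ω), X n ω)).map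
        (fun p => (Fin.snoc p.1 p.2 : Fin (n + 1) → 𝕏)) := by
  rw [Measure.map_map (measurable_snoc n) ((measurable_prefix hX n).prodMk (hX n))]
  congr 1
  funext ω i
  cases i using Fin.lastCases <;> simp

theorem PredEq.map_pair_eq_compProd [IsFiniteMeasure P] {ν : Measure 𝕏} [IsFiniteMeasure ν]
    {R : Kernel 𝕏 𝕏} [IsFiniteKernel R] {a : ℕ → ℝ} (hpred : PredEq P X ν R a)
    (hX : ∀ k, Measurable (X k)) {n : ℕ} (hn : 1 ≤ n) :
    P.map (fun ω => ((fun i : Fin n => X i ω), X n ω)) =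
      P.map (fun ω (i : Fin n) => X i ω) ⊗ₘ predictiveKernel ν R a n := by
  refine Measure.ext_prod fun {A B} hA hB => ?_
  rw [Measure.map_apply ((measurable_prefix hX n).prodMk (hX n)) (hA.prod hB),
    Measure.compProd_apply_prod hA hB]
  simp only [predictiveKernel_apply]
  exact hpred n hn B hB A hA

end JointLaw

theorem HypH.smul_pi_le_map_prefix {Ω 𝕏 : Type*} [MeasurableSpace Ω] [MeasurableSpace 𝕏]
    {P : Measure Ω} {X : ℕ → Ω → 𝕏} {ν : Measure 𝕏} {R : Kernel 𝕏 𝕏} {a : ℕ → ℝ}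
    (hH : HypH P X ν R a) {n : ℕ} (hn : 1 ≤ n) :
    (∏ i ∈ Finset.Icc 1 (n - 1), ENNReal.ofReal (1 - a i)) • Measure.pi (fun _ : Fin n => ν) ≤
      P.map (fun ω (i : Fin n) => X i ω) := by
  have := hH.probP
  have := hH.probν
  have := hH.markov
  induction n, hn using Nat.le_induction with
  | base =>
    rw [map_prefix_one (hH.meas 0), hH.marginal 0]
    simp
  | succ n hn ih =>
    have hconst : ∏ i ∈ Finset.Icc 1 (n + 1 - 1), ENNReal.ofReal (1 - a i) =
        (∏ i ∈ Finset.Icc 1 (n - 1), ENNReal.ofReal (1 - a i)) * ENNReal.ofReal (1 - a n) := by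
      have := Finset.prod_Icc_succ_top (by omega : 1 ≤ n - 1 + 1) fun i => ENNReal.ofReal (1 - a i)
      rwa [Nat.sub_add_cancel hn] at this
    rw [hconst, ← map_snoc_prod_pi, ← Measure.map_smul, map_prefix_succ hH.meas,
      hH.pred.map_pair_eq_compProd hH.meas hn]
    exact Measure.map_mono (Measure.smul_prod_le_compProd ih smul_le_predictiveKernel)
      (measurable_snoc n)

theorem joint_law_dominates_product_general {Ω 𝕏 : Type*} [MeasurableSpace Ω] [MeasurableSpace 𝕏]
    (P : Measure Ω) (X : ℕ → Ω → 𝕏) (ν : Measure 𝕏) (R : Kernel 𝕏 𝕏) (a : ℕ → ℝ)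
    (hH : HypH P X ν R a) :
    ∀ n : ℕ, 1 ≤ n → ∀ A : Set (Fin n → 𝕏), MeasurableSet A →
      (∏ i ∈ Finset.Icc 1 (n - 1), ENNReal.ofReal (1 - a i)) *
          Measure.pi (fun _ : Fin n => ν) A ≤
        P.map (fun ω (i : Fin n) => X i ω) A :=
  fun _ hn A _ => hH.smul_pi_le_map_prefix hn A

/-- under Hypothesis (H), the joint law of `(X_1,…,X_n)` dominates
`(∏_{i=1}^{n-1} (1 - a_i)) ν^{⊗n}`. -/
theorem joint_law_dominates_product {Ω 𝕏 : Type*} [MeasurableSpace Ω] [MeasurableSpace 𝕏]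
    [StandardBorelSpace 𝕏]
    (P : Measure Ω) (X : ℕ → Ω → 𝕏) (ν : Measure 𝕏) (R : Kernel 𝕏 𝕏) (a : ℕ → ℝ)
    (hH : HypH P X ν R a) :
    ∀ n : ℕ, 1 ≤ n → ∀ A : Set (Fin n → 𝕏), MeasurableSet A →
      (∏ i ∈ Finset.Icc 1 (n - 1), ENNReal.ofReal (1 - a i)) *
          Measure.pi (fun _ : Fin n => ν) A ≤
        P.map (fun ω (i : Fin n) => X i ω) A :=
  joint_law_dominates_product_general P X ν R a hH
end

section
/- Suppose Hypothesis (H) holds, set c* := (a_2 − 2a_1 + a_1a_2)/(a_1a_2), and assume there is a jointly measurable function r : 𝕏 × 𝕏 → ℝ_+ such that R_x(dy) = r(x,y)·ν(dy) for ν-almost every x. Then (i) r(x,y) = r(y,x) for ν⊗ν-almost every (x,y) ∈ 𝕏², and (ii) r(x,y)·(r(y,z) − c*) = r(x,z)·(r(y,z) − c*) for ν⊗ν⊗ν-almost every (x,y,z) ∈ 𝕏³. -/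
open MeasureTheory ProbabilityTheory ENNReal

/-! By the predictive rule, relative to `ν ⊗ ν` the pair `(X₁, X₂)` has density
`(1 - a₁) + a₁ r(x, y)`, and relative to `ν ⊗ ν ⊗ ν` the triple `(X₁, X₂, X₃)` has density
`((1 - a₁) + a₁ r(x, y)) ((1 - a₂) + (a₂ / 2) (r(x, z) + r(y, z)))`. Exchangeability makes the
first density invariant under `x ↔ y` and the second under `y ↔ z`, almost everywhere. The first
invariance is the symmetry of `r`; in the second, once `r(z, y) = r(y, z)`, the difference of the
two sides factors as `(a₁ a₂ / 2) (r(x, y) - r(x, z)) (r(y, z) - c*)`. -/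

namespace MeasureTheory.Measure

variable {α β γ : Type*} [MeasurableSpace α] [MeasurableSpace β] [MeasurableSpace γ]

theorem map_withDensity_comp {μ : Measure α} {φ : α → β} (hφ : Measurable φ)
    {G : β → ℝ≥0∞} (hG : Measurable G) :
    (μ.withDensity (G ∘ φ)).map φ = (μ.map φ).withDensity G := by
  ext s hs
  rw [map_apply hφ hs, withDensity_apply _ (hφ hs), withDensity_apply _ hs,
    setLIntegral_map hs hG hφ]
  rfl

theorem map_prodMap_withDensity {μ : Measure α} {ν : Measure γ} [SFinite μ] [SFinite ν]
    {φ : α → β} (hφ : Measurable φ) {G : β × γ → ℝ≥0∞} (hG : Measurable G) :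
    ((μ.prod ν).withDensity fun p => G (φ p.1, p.2)).map (Prod.map φ id) =
      ((μ.map φ).prod ν).withDensity G := by
  have hprod := map_prod_map μ ν hφ measurable_id
  rw [map_id] at hprod
  rw [hprod, ← map_withDensity_comp (hφ.prodMap measurable_id) hG]
  rfl

theorem ae_comp_eq_of_map_withDensity_eq {μ : Measure α} [SigmaFinite μ] {T : α → α}
    (hT : MeasurePreserving T μ μ) (hTT : Function.Involutive T) {F : α → ℝ≥0∞}
    (hF : Measurable F) (h : (μ.withDensity F).map T = μ.withDensity F) :
    F ∘ T =ᵐ[μ] F := by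
  have hFTT : (F ∘ T) ∘ T = F := funext fun x => congrArg F (hTT x)
  rw [← hFTT, map_withDensity_comp hT.measurable (hF.comp hT.measurable), hT.map_eq,
    hFTT] at h
  exact (withDensity_eq_iff_of_sigmaFinite (hF.comp hT.measurable).aemeasurable
    hF.aemeasurable).mp h

theorem eq_prod_withDensity_of_forall_prod {ρ : Measure (α × β)} [IsFiniteMeasure ρ]
    {μ : Measure α} {ν : Measure β} [SFinite μ] [SFinite ν] {F : α × β → ℝ≥0∞}
    (hF : Measurable F)
    (h : ∀ s t, MeasurableSet s → MeasurableSet t →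
      ρ (s ×ˢ t) = ∫⁻ x in s, ∫⁻ y in t, F (x, y) ∂ν ∂μ) :
    ρ = (μ.prod ν).withDensity F := by
  have hrect : ∀ s t, MeasurableSet s → MeasurableSet t →
      ρ (s ×ˢ t) = (μ.prod ν).withDensity F (s ×ˢ t) := by
    intro s t hs ht
    rw [h s t hs ht, withDensity_apply _ (hs.prod ht), ← prod_restrict,
      lintegral_prod _ hF.aemeasurable]
  refine ext_of_generate_finite _ generateFrom_prod.symm isPiSystem_prod ?_ ?_
  · rintro _ ⟨s, hs, t, ht, rfl⟩
    exact hrect s t hs ht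
  · simpa using hrect Set.univ Set.univ .univ .univ

theorem measurePreserving_swap_last_two (μ : Measure α) (ν : Measure β) [SFinite μ]
    [SFinite ν] :
    MeasurePreserving (fun q : (α × β) × β => ((q.1.1, q.2), q.1.2))
      ((μ.prod ν).prod ν) ((μ.prod ν).prod ν) :=
  ((measurePreserving_prodAssoc μ ν ν).symm MeasurableEquiv.prodAssoc).comp
    (((MeasurePreserving.id μ).prod (measurePreserving_swap ..)).comp
      (measurePreserving_prodAssoc μ ν ν))

end MeasureTheory.Measure

theorem Measurable.uncurry_comp₂ {α β γ δ : Type*} [MeasurableSpace α] [MeasurableSpace β]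
    [MeasurableSpace γ] [MeasurableSpace δ] {r : β → γ → δ}
    (hr : Measurable fun p : β × γ => r p.1 p.2) {f : α → β} (hf : Measurable f) {g : α → γ}
    (hg : Measurable g) : Measurable fun x => r (f x) (g x) :=
  hr.comp (hf.prodMk hg)

theorem Exchangeable.map_comp_perm {Ω 𝕏 β : Type*} [MeasurableSpace Ω] [MeasurableSpace 𝕏]
    [MeasurableSpace β] {P : Measure Ω} {X : ℕ → Ω → 𝕏} (hX : Exchangeable P X)
    (hmeas : ∀ n, Measurable (X n)) {n : ℕ} (σ : Equiv.Perm (Fin n))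
    {g : (Fin n → 𝕏) → β} (hg : Measurable g) :
    P.map (fun ω => g fun i => X (σ i) ω) = P.map (fun ω => g fun i => X i ω) :=
  calc P.map (fun ω => g fun i => X (σ i) ω)
      = (P.map fun ω (i : Fin n) => X (σ i) ω).map g :=
        (Measure.map_map hg (measurable_pi_lambda _ fun _ => hmeas _)).symm
    _ = (P.map fun ω (i : Fin n) => X i ω).map g := by rw [hX n σ]
    _ = P.map (fun ω => g fun i => X i ω) :=
        Measure.map_map hg (measurable_pi_lambda _ fun _ => hmeas _)

theorem Exchangeable.map_swap {Ω 𝕏 : Type*} [MeasurableSpace Ω] [MeasurableSpace 𝕏]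
    {P : Measure Ω} {X : ℕ → Ω → 𝕏} (hX : Exchangeable P X) (hmeas : ∀ n, Measurable (X n)) :
    (P.map fun ω => (X 0 ω, X 1 ω)).map Prod.swap = P.map fun ω => (X 0 ω, X 1 ω) := by
  rw [Measure.map_map measurable_swap ((hmeas 0).prodMk (hmeas 1))]
  have h := hX.map_comp_perm hmeas (Equiv.swap 0 1)
    (g := fun x : Fin 2 → 𝕏 => (x 0, x 1)) (by fun_prop)
  simp only [Equiv.swap_apply_left, Equiv.swap_apply_right, Fin.val_zero, Fin.val_one] at h
  exact h

theorem Exchangeable.map_swap_last_two {Ω 𝕏 : Type*} [MeasurableSpace Ω]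
    [MeasurableSpace 𝕏] {P : Measure Ω} {X : ℕ → Ω → 𝕏} (hX : Exchangeable P X)
    (hmeas : ∀ n, Measurable (X n)) :
    (P.map fun ω => ((X 0 ω, X 1 ω), X 2 ω)).map (fun q => ((q.1.1, q.2), q.1.2)) =
      P.map fun ω => ((X 0 ω, X 1 ω), X 2 ω) := by
  rw [Measure.map_map (by fun_prop) (((hmeas 0).prodMk (hmeas 1)).prodMk (hmeas 2))]
  have h := hX.map_comp_perm hmeas (Equiv.swap 1 2)
    (g := fun x : Fin 3 → 𝕏 => ((x 0, x 1), x 2)) (by fun_prop)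
  simp only [ne_eq, Fin.reduceEq, not_false_eq_true, Equiv.swap_apply_of_ne_of_ne,
    Equiv.swap_apply_left, Equiv.swap_apply_right, Fin.coe_ofNat_eq_mod, Nat.zero_mod,
    Nat.one_mod, Nat.mod_succ] at h
  exact h

/-- The `ν`-density of `(1 - a) ν + (a / n) ∑ᵢ R_{x i}` when `R_y = r(y, ·) ν`. -/
noncomputable def predictiveDensity {𝕏 : Type*} (r : 𝕏 → 𝕏 → ℝ) (a : ℝ) {n : ℕ}
    (x : Fin n → 𝕏) (z : 𝕏) : ℝ :=
  1 - a + a / n * ∑ i, r (x i) z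

section PredictiveDensity

variable {𝕏 : Type*} [MeasurableSpace 𝕏] {r : 𝕏 → 𝕏 → ℝ}

theorem measurable_predictiveDensity (hr_meas : Measurable fun p : 𝕏 × 𝕏 => r p.1 p.2)
    (a : ℝ) (n : ℕ) :
    Measurable fun p : (Fin n → 𝕏) × 𝕏 => predictiveDensity r a p.1 p.2 :=
  measurable_const.add <| measurable_const.mul <| Finset.measurable_sum _ fun i _ =>
    hr_meas.uncurry_comp₂ ((measurable_pi_apply i).comp measurable_fst) measurable_snd

theorem setLIntegral_ofReal_predictiveDensity (ν : Measure 𝕏)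
    (hr_meas : Measurable fun p : 𝕏 × 𝕏 => r p.1 p.2) (hr_nonneg : ∀ x y, 0 ≤ r x y)
    {a : ℝ} (ha : a ∈ Set.Icc 0 1) {n : ℕ} (hn : 0 < n) (x : Fin n → 𝕏) (B : Set 𝕏) :
    ∫⁻ z in B, ENNReal.ofReal (predictiveDensity r a x z) ∂ν =
      ENNReal.ofReal (1 - a) * ν B +
        ENNReal.ofReal a / n * ∑ i, ∫⁻ z in B, ENNReal.ofReal (r (x i) z) ∂ν := by
  have hmeas : ∀ i, Measurable fun z => ENNReal.ofReal (r (x i) z) := fun i =>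
    (hr_meas.comp measurable_prodMk_left).ennreal_ofReal
  have hsplit : ∀ z, ENNReal.ofReal (predictiveDensity r a x z) =
      ENNReal.ofReal (1 - a) + ENNReal.ofReal a / n * ∑ i, ENNReal.ofReal (r (x i) z) := by
    intro z
    have hsum : 0 ≤ ∑ i, r (x i) z := Finset.sum_nonneg fun i _ => hr_nonneg _ _
    rw [predictiveDensity, ENNReal.ofReal_add (by linarith [ha.2])
      (mul_nonneg (div_nonneg ha.1 n.cast_nonneg) hsum), ENNReal.ofReal_mul
      (div_nonneg ha.1 n.cast_nonneg), ENNReal.ofReal_div_of_pos (by exact_mod_cast hn),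
      ENNReal.ofReal_natCast, ENNReal.ofReal_sum_of_nonneg fun i _ => hr_nonneg _ _]
  simp_rw [hsplit]
  rw [lintegral_add_left measurable_const, setLIntegral_const,
    lintegral_const_mul _ (Finset.measurable_sum _ fun i _ => hmeas i),
    lintegral_finsetSum _ fun i _ => hmeas i]

end PredictiveDensity

noncomputable def tripleDensity {𝕏 : Type*} (r : 𝕏 → 𝕏 → ℝ) (a : ℕ → ℝ) (x y z : 𝕏) : ℝ :=
  (1 - a 1 + a 1 * r x y) * (1 - a 2 + a 2 / 2 * (r x z + r y z))

section TripleDensity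

variable {𝕏 : Type*} {r : 𝕏 → 𝕏 → ℝ} {a : ℕ → ℝ}

theorem measurable_tripleDensity [MeasurableSpace 𝕏]
    (hr_meas : Measurable fun p : 𝕏 × 𝕏 => r p.1 p.2) :
    Measurable fun q : (𝕏 × 𝕏) × 𝕏 => tripleDensity r a q.1.1 q.1.2 q.2 := by
  have h₁₂ : Measurable fun q : (𝕏 × 𝕏) × 𝕏 => r q.1.1 q.1.2 :=
    hr_meas.uncurry_comp₂ measurable_fst.fst measurable_fst.snd
  have h₁₃ : Measurable fun q : (𝕏 × 𝕏) × 𝕏 => r q.1.1 q.2 :=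
    hr_meas.uncurry_comp₂ measurable_fst.fst measurable_snd
  have h₂₃ : Measurable fun q : (𝕏 × 𝕏) × 𝕏 => r q.1.2 q.2 :=
    hr_meas.uncurry_comp₂ measurable_fst.snd measurable_snd
  unfold tripleDensity
  fun_prop

theorem tripleDensity_nonneg (hr_nonneg : ∀ x y, 0 ≤ r x y) (h₁ : a 1 ∈ Set.Icc 0 1)
    (h₂ : a 2 ∈ Set.Icc 0 1) (x y z : 𝕏) : 0 ≤ tripleDensity r a x y z := by
  have := hr_nonneg x y
  have := add_nonneg (hr_nonneg x z) (hr_nonneg y z)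
  apply mul_nonneg <;> nlinarith [h₁.1, h₁.2, h₂.1, h₂.2]

end TripleDensity

namespace HypH

variable {Ω 𝕏 : Type*} [MeasurableSpace Ω] [MeasurableSpace 𝕏]
  {P : Measure Ω} {X : ℕ → Ω → 𝕏} {ν : Measure 𝕏} {R : Kernel 𝕏 𝕏} {a : ℕ → ℝ}
  {r : 𝕏 → 𝕏 → ℝ}

theorem map_prefix_next (hH : HypH P X ν R a) (hr_meas : Measurable fun p : 𝕏 × 𝕏 => r p.1 p.2)
    (hr_nonneg : ∀ x y, 0 ≤ r x y)
    (hr : ∀ᵐ x ∂ν, (R x : Measure 𝕏) = ν.withDensity fun y => ENNReal.ofReal (r x y))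
    {n : ℕ} (hn : 1 ≤ n) :
    P.map (fun ω => (fun i : Fin n => X i ω, X n ω)) =
      ((P.map fun ω (i : Fin n) => X i ω).prod ν).withDensity
        fun p => ENNReal.ofReal (predictiveDensity r (a n) p.1 p.2) := by
  have := hH.probP
  have := hH.probν
  have hprefix : Measurable fun ω (i : Fin n) => X i ω :=
    measurable_pi_lambda _ fun i => hH.meas i
  have hkernel : ∀ᵐ x ∂(P.map fun ω (i : Fin n) => X i ω), ∀ i, ∀ B, MeasurableSet B →
      R (x i) B = ∫⁻ z in B, ENNReal.ofReal (r (x i) z) ∂ν := by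
    rw [ae_all_iff]
    intro i
    have heval : Measurable fun x : Fin n → 𝕏 => x i := measurable_pi_apply i
    have hmarginal : (P.map fun ω (i : Fin n) => X i ω).map (fun x => x i) = ν := by
      rw [Measure.map_map heval hprefix]
      exact hH.marginal i
    refine ae_of_ae_map (p := fun y => ∀ B, MeasurableSet B →
      R y B = ∫⁻ z in B, ENNReal.ofReal (r y z) ∂ν) heval.aemeasurable ?_
    rw [hmarginal]
    filter_upwards [hr] with y hy B hB
    rw [hy, withDensity_apply _ hB]
  refine Measure.eq_prod_withDensity_of_forall_prod
    (measurable_predictiveDensity hr_meas (a n) n).ennreal_ofReal fun S B hS hB => ?_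
  rw [Measure.map_apply (hprefix.prodMk (hH.meas n)) (hS.prod hB)]
  refine (hH.pred n hn B hB S hS).trans (setLIntegral_congr_fun_ae hS ?_)
  filter_upwards [hkernel] with x hx _
  rw [setLIntegral_ofReal_predictiveDensity ν hr_meas hr_nonneg
    (Set.Ioo_subset_Icc_self (hH.a_mem n hn)) hn]
  simp only [hx _ _ hB]

theorem map_pair (hH : HypH P X ν R a) (hr_meas : Measurable fun p : 𝕏 × 𝕏 => r p.1 p.2)
    (hr_nonneg : ∀ x y, 0 ≤ r x y)
    (hr : ∀ᵐ x ∂ν, (R x : Measure 𝕏) = ν.withDensity fun y => ENNReal.ofReal (r x y)) :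
    P.map (fun ω => (X 0 ω, X 1 ω)) =
      (ν.prod ν).withDensity fun p => ENNReal.ofReal (1 - a 1 + a 1 * r p.1 p.2) := by
  have := hH.probP
  have := hH.probν
  set f : 𝕏 × 𝕏 → ℝ≥0∞ := fun p => ENNReal.ofReal (1 - a 1 + a 1 * r p.1 p.2)
  have hf : Measurable f := (measurable_const.add (hr_meas.const_mul _)).ennreal_ofReal
  have hfirst : Measurable fun x : Fin 1 → 𝕏 => x 0 := measurable_pi_apply 0
  have hprefix : Measurable fun ω (i : Fin 1) => X i ω :=
    measurable_pi_lambda _ fun i => hH.meas i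
  calc P.map (fun ω => (X 0 ω, X 1 ω))
      = (P.map fun ω => (fun i : Fin 1 => X i ω, X 1 ω)).map (Prod.map (· 0) id) :=
        (Measure.map_map (hfirst.prodMap measurable_id) (hprefix.prodMk (hH.meas 1))).symm
    _ = (((P.map fun ω (i : Fin 1) => X i ω).prod ν).withDensity
          fun p => f (p.1 0, p.2)).map (Prod.map (· 0) id) := by
        rw [hH.map_prefix_next hr_meas hr_nonneg hr le_rfl]
        simp [f, predictiveDensity]
    _ = ((P.map fun ω (i : Fin 1) => X i ω).map (· 0) |>.prod ν).withDensity f :=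
        Measure.map_prodMap_withDensity hfirst hf
    _ = (ν.prod ν).withDensity f := by
        rw [Measure.map_map hfirst hprefix]
        exact congrArg (fun μ => (μ.prod ν).withDensity f) (hH.marginal 0)

theorem map_triple (hH : HypH P X ν R a) (hr_meas : Measurable fun p : 𝕏 × 𝕏 => r p.1 p.2)
    (hr_nonneg : ∀ x y, 0 ≤ r x y)
    (hr : ∀ᵐ x ∂ν, (R x : Measure 𝕏) = ν.withDensity fun y => ENNReal.ofReal (r x y)) :
    P.map (fun ω => ((X 0 ω, X 1 ω), X 2 ω)) =
      ((ν.prod ν).prod ν).withDensity fun q =>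
        ENNReal.ofReal (tripleDensity r a q.1.1 q.1.2 q.2) := by
  have := hH.probP
  have := hH.probν
  set f : 𝕏 × 𝕏 → ℝ≥0∞ := fun p => ENNReal.ofReal (1 - a 1 + a 1 * r p.1 p.2)
  have hf : Measurable f := (measurable_const.add (hr_meas.const_mul _)).ennreal_ofReal
  set g : (𝕏 × 𝕏) × 𝕏 → ℝ≥0∞ :=
    fun q => ENNReal.ofReal (1 - a 2 + a 2 / 2 * (r q.1.1 q.2 + r q.1.2 q.2))
  have hg : Measurable g := (measurable_const.add (((hr_meas.uncurry_comp₂ measurable_fst.fst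
    measurable_snd).add (hr_meas.uncurry_comp₂ measurable_fst.snd measurable_snd)).const_mul
      _)).ennreal_ofReal
  have hfirst : Measurable fun x : Fin 2 → 𝕏 => (x 0, x 1) := by fun_prop
  have hprefix : Measurable fun ω (i : Fin 2) => X i ω :=
    measurable_pi_lambda _ fun i => hH.meas i
  have hmarginal : (P.map fun ω (i : Fin 2) => X i ω).map (fun x => (x 0, x 1)) =
      (ν.prod ν).withDensity f := by
    rw [Measure.map_map hfirst hprefix]
    exact hH.map_pair hr_meas hr_nonneg hr
  calc P.map (fun ω => ((X 0 ω, X 1 ω), X 2 ω))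
      = (P.map fun ω => (fun i : Fin 2 => X i ω, X 2 ω)).map
          (Prod.map (fun x => (x 0, x 1)) id) :=
        (Measure.map_map (hfirst.prodMap measurable_id) (hprefix.prodMk (hH.meas 2))).symm
    _ = (((P.map fun ω (i : Fin 2) => X i ω).prod ν).withDensity
          fun p => g ((p.1 0, p.1 1), p.2)).map (Prod.map (fun x => (x 0, x 1)) id) := by
        rw [hH.map_prefix_next hr_meas hr_nonneg hr one_le_two]
        simp [g, predictiveDensity, Fin.sum_univ_two]
    _ = (((P.map fun ω (i : Fin 2) => X i ω).map fun x => (x 0, x 1)).prod ν).withDensity g :=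
        Measure.map_prodMap_withDensity hfirst hg
    _ = ((ν.prod ν).prod ν).withDensity ((fun q => f q.1) * g) := by
        rw [hmarginal, prod_withDensity_left hf]
        exact (withDensity_mul _ (hf.comp measurable_fst) hg).symm
    _ = _ := by
        congr 1
        funext q
        obtain ⟨h₁, h₁'⟩ := hH.a_mem 1 le_rfl
        rw [Pi.mul_apply, ← ENNReal.ofReal_mul (by nlinarith [hr_nonneg q.1.1 q.1.2])]
        rfl

theorem ae_density_symm (hH : HypH P X ν R a)
    (hr_meas : Measurable fun p : 𝕏 × 𝕏 => r p.1 p.2) (hr_nonneg : ∀ x y, 0 ≤ r x y)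
    (hr : ∀ᵐ x ∂ν, (R x : Measure 𝕏) = ν.withDensity fun y => ENNReal.ofReal (r x y)) :
    ∀ᵐ p ∂(ν.prod ν), r p.1 p.2 = r p.2 p.1 := by
  have := hH.probν
  obtain ⟨h₁, h₁'⟩ := hH.a_mem 1 le_rfl
  have hf : Measurable fun p : 𝕏 × 𝕏 => ENNReal.ofReal (1 - a 1 + a 1 * r p.1 p.2) :=
    (measurable_const.add (hr_meas.const_mul _)).ennreal_ofReal
  have hswap := hH.exch.map_swap hH.meas
  rw [hH.map_pair hr_meas hr_nonneg hr] at hswap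
  filter_upwards [Measure.ae_comp_eq_of_map_withDensity_eq (Measure.measurePreserving_swap ..)
    Prod.swap_swap hf hswap] with p hp
  simp only [Function.comp_apply, Prod.fst_swap, Prod.snd_swap] at hp
  have hp' := (ENNReal.ofReal_eq_ofReal_iff (by nlinarith [hr_nonneg p.2 p.1])
    (by nlinarith [hr_nonneg p.1 p.2])).mp hp
  exact (mul_left_cancel₀ h₁.ne' (by linarith : a 1 * r p.2 p.1 = a 1 * r p.1 p.2)).symm

theorem ae_tripleDensity_swap (hH : HypH P X ν R a)
    (hr_meas : Measurable fun p : 𝕏 × 𝕏 => r p.1 p.2) (hr_nonneg : ∀ x y, 0 ≤ r x y)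
    (hr : ∀ᵐ x ∂ν, (R x : Measure 𝕏) = ν.withDensity fun y => ENNReal.ofReal (r x y)) :
    ∀ᵐ q ∂((ν.prod ν).prod ν),
      tripleDensity r a q.1.1 q.2 q.1.2 = tripleDensity r a q.1.1 q.1.2 q.2 := by
  have := hH.probν
  have hnonneg := tripleDensity_nonneg hr_nonneg (Set.Ioo_subset_Icc_self (hH.a_mem 1 le_rfl))
    (Set.Ioo_subset_Icc_self (hH.a_mem 2 one_le_two))
  have hswap := hH.exch.map_swap_last_two hH.meas
  rw [hH.map_triple hr_meas hr_nonneg hr] at hswap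
  filter_upwards [Measure.ae_comp_eq_of_map_withDensity_eq
    (Measure.measurePreserving_swap_last_two ν ν) (fun _ => rfl)
    (measurable_tripleDensity hr_meas).ennreal_ofReal hswap] with q hq
  exact (ENNReal.ofReal_eq_ofReal_iff (hnonneg _ _ _) (hnonneg _ _ _)).mp hq

end HypH

theorem mul_sub_eq_mul_sub_of_tripleDensity_swap {𝕏 : Type*} {r : 𝕏 → 𝕏 → ℝ} {a : ℕ → ℝ}
    (h₁ : a 1 ≠ 0) (h₂ : a 2 ≠ 0) {x y z : 𝕏} (hyz : r z y = r y z)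
    (h : tripleDensity r a x z y = tripleDensity r a x y z) :
    r x y * (r y z - (a 2 - 2 * a 1 + a 1 * a 2) / (a 1 * a 2)) =
      r x z * (r y z - (a 2 - 2 * a 1 + a 1 * a 2) / (a 1 * a 2)) := by
  unfold tripleDensity at h
  rw [hyz] at h
  have hprod : (r x y - r x z) * (r y z * (a 1 * a 2) - (a 2 - 2 * a 1 + a 1 * a 2)) = 0 := by
    linear_combination (-2 : ℝ) * h
  rcases mul_eq_zero.mp hprod with hxy | hc
  · rw [sub_eq_zero.mp hxy]
  · have hyz_eq : (a 2 - 2 * a 1 + a 1 * a 2) / (a 1 * a 2) = r y z := by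
      rw [div_eq_iff (mul_ne_zero h₁ h₂)]
      linarith
    rw [hyz_eq, sub_self, mul_zero, mul_zero]

theorem density_identities_general {Ω 𝕏 : Type*} [MeasurableSpace Ω] [MeasurableSpace 𝕏]
    (P : Measure Ω) (X : ℕ → Ω → 𝕏) (ν : Measure 𝕏) (R : Kernel 𝕏 𝕏) (a : ℕ → ℝ)
    (hH : HypH P X ν R a)
    (r : 𝕏 → 𝕏 → ℝ) (hr_meas : Measurable fun p : 𝕏 × 𝕏 => r p.1 p.2)
    (hr_nonneg : ∀ x y, 0 ≤ r x y)
    (hr : ∀ᵐ x ∂ν, (R x : Measure 𝕏) = ν.withDensity fun y => ENNReal.ofReal (r x y)) :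
    (∀ᵐ p ∂(ν.prod ν), r p.1 p.2 = r p.2 p.1) ∧
      ∀ᵐ p ∂(ν.prod (ν.prod ν)),
        r p.1 p.2.1 * (r p.2.1 p.2.2 - (a 2 - 2 * a 1 + a 1 * a 2) / (a 1 * a 2)) =
          r p.1 p.2.2 * (r p.2.1 p.2.2 - (a 2 - 2 * a 1 + a 1 * a 2) / (a 1 * a 2)) := by
  have := hH.probν
  have hsymm := hH.ae_density_symm hr_meas hr_nonneg hr
  refine ⟨hsymm, ?_⟩
  have hsymm₂₃ : ∀ᵐ q ∂((ν.prod ν).prod ν), r q.2 q.1.2 = r q.1.2 q.2 :=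
    ((Measure.quasiMeasurePreserving_snd (μ := ν) (ν := ν.prod ν)).comp
      (measurePreserving_prodAssoc ν ν ν).quasiMeasurePreserving).tendsto_ae.eventually
      (hsymm.mono fun _ h => h.symm)
  have hidentity : ∀ᵐ q ∂((ν.prod ν).prod ν),
      r q.1.1 q.1.2 * (r q.1.2 q.2 - (a 2 - 2 * a 1 + a 1 * a 2) / (a 1 * a 2)) =
        r q.1.1 q.2 * (r q.1.2 q.2 - (a 2 - 2 * a 1 + a 1 * a 2) / (a 1 * a 2)) := by
    filter_upwards [hH.ae_tripleDensity_swap hr_meas hr_nonneg hr, hsymm₂₃] with q hq hq₂₃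
    exact mul_sub_eq_mul_sub_of_tripleDensity_swap (hH.a_mem 1 le_rfl).1.ne'
      (hH.a_mem 2 one_le_two).1.ne' hq₂₃ hq
  exact ((measurePreserving_prodAssoc ν ν ν).symm
    MeasurableEquiv.prodAssoc).quasiMeasurePreserving.tendsto_ae.eventually hidentity

/-- under Hypothesis (H), if `R_x(dy) = r(x,y) ν(dy)` for a jointly
measurable nonnegative `r`, then `r` is symmetric ν⊗ν-a.e. and satisfies
`r(x,y)(r(y,z) - c*) = r(x,z)(r(y,z) - c*)` ν⊗ν⊗ν-a.e. -/
theorem density_identities {Ω 𝕏 : Type*} [MeasurableSpace Ω] [MeasurableSpace 𝕏]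
    [StandardBorelSpace 𝕏]
    (P : Measure Ω) (X : ℕ → Ω → 𝕏) (ν : Measure 𝕏) (R : Kernel 𝕏 𝕏) (a : ℕ → ℝ)
    (hH : HypH P X ν R a)
    (r : 𝕏 → 𝕏 → ℝ) (hr_meas : Measurable fun p : 𝕏 × 𝕏 => r p.1 p.2)
    (hr_nonneg : ∀ x y, 0 ≤ r x y)
    (hr : ∀ᵐ x ∂ν, (R x : Measure 𝕏) = ν.withDensity fun y => ENNReal.ofReal (r x y)) :
    (∀ᵐ p ∂(ν.prod ν), r p.1 p.2 = r p.2 p.1) ∧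
      ∀ᵐ p ∂(ν.prod (ν.prod ν)),
        r p.1 p.2.1 * (r p.2.1 p.2.2 - (a 2 - 2 * a 1 + a 1 * a 2) / (a 1 * a 2)) =
          r p.1 p.2.2 * (r p.2.1 p.2.2 - (a 2 - 2 * a 1 + a 1 * a 2) / (a 1 * a 2)) :=
  density_identities_general P X ν R a hH r hr_meas hr_nonneg hr
end

section
/- Suppose Hypothesis (H) holds, set c* := (a_2 − 2a_1 + a_1a_2)/(a_1a_2), and assume R_x ≪ ν for ν-almost every x. If c* < 0, then R_x = ν for ν-almost every x. -/
/-!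
Write `p = ν B` and `f t = R t B`. By exchangeability `(X₀, X₂)` and `(X₀, X₁)` have the same
law. Conditionally on `X₀ = t` the predictive rule gives the law of `X₁` directly, and that of
`X₂` after averaging `R_{X₁}` over the law of `X₁`; using the invariance `ν R = ν` (the rule for
`n = 1` integrated in `t`) the two computations give, for `ν`-a.e. `t`,
`(2 a₁ - a₂) (f t - p) = a₁ a₂ ((R f) t - p)`.
When `c* < 0` the factor `a₁ a₂ / (2 a₁ - a₂)` lies in `[0, 1)`, and because `R t ≪ ν` the Markov
operator `R` does not increase the `ν`-essential supremum. So `f - p` is a fixed point of a strict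
contraction of `L^∞(ν)` and vanishes. Since `𝕏` is countably generated, `R t B = ν B` for every `B`
upgrades to `R t = ν`.
-/

open MeasureTheory ProbabilityTheory ENNReal

namespace ProbabilityTheory.Kernel

variable {α β : Type*} {mα : MeasurableSpace α} {mβ : MeasurableSpace β}

lemma ae_eq_const_of_forall_ae_apply_eq [MeasurableSpace.CountableOrCountablyGenerated α β]
    {μ : Measure α} [IsFiniteMeasure μ] {κ : Kernel α β} [IsFiniteKernel κ]
    {ρ : Measure β} [IsFiniteMeasure ρ]
    (h : ∀ s, MeasurableSet s → ∀ᵐ a ∂μ, κ a s = ρ s) :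
    κ =ᵐ[μ] const α ρ := by
  refine ae_eq_of_compProd_eq (Measure.ext_prod fun hs ht => ?_)
  rw [Measure.compProd_apply_prod hs ht, Measure.compProd_apply_prod hs ht]
  exact setLIntegral_congr_fun_ae hs ((h _ ht).mono fun a ha _ => by simpa using ha)

lemma eLpNormEssSup_integral_le {E : Type*} [NormedAddCommGroup E] [NormedSpace ℝ E]
    {μ : Measure α} {ρ : Measure β} {κ : Kernel α β} [IsMarkovKernel κ]
    (hκ : ∀ᵐ a ∂μ, κ a ≪ ρ) (f : β → E) :
    eLpNormEssSup (fun a => ∫ b, f b ∂κ a) μ ≤ eLpNormEssSup f ρ := by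
  refine eLpNormEssSup_le_of_ae_enorm_bound ?_
  filter_upwards [hκ] with a ha
  calc ‖∫ b, f b ∂κ a‖ₑ ≤ ∫⁻ b, ‖f b‖ₑ ∂κ a := enorm_integral_le_lintegral_enorm f
    _ ≤ ∫⁻ _, eLpNormEssSup f ρ ∂κ a := lintegral_mono_ae (ha.ae_le ae_le_eLpNormEssSup)
    _ = eLpNormEssSup f ρ := by simp

lemma ae_eq_zero_of_ae_eq_smul_integral {E : Type*} [NormedAddCommGroup E] [NormedSpace ℝ E]
    {μ : Measure α} {κ : Kernel α α} [IsMarkovKernel κ] (hκ : ∀ᵐ a ∂μ, κ a ≪ μ)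
    {f : α → E} (hf : eLpNormEssSup f μ ≠ ∞) {c : ℝ} (hc : ‖c‖ < 1)
    (hfix : ∀ᵐ a ∂μ, f a = c • ∫ b, f b ∂κ a) :
    f =ᵐ[μ] 0 := by
  have hle : eLpNormEssSup f μ ≤ ‖c‖ₑ * eLpNormEssSup f μ :=
    calc eLpNormEssSup f μ = eLpNormEssSup (c • fun a => ∫ b, f b ∂κ a) μ :=
          eLpNormEssSup_congr_ae hfix
      _ ≤ ‖c‖ₑ * eLpNormEssSup (fun a => ∫ b, f b ∂κ a) μ := eLpNormEssSup_const_smul_le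
      _ ≤ ‖c‖ₑ * eLpNormEssSup f μ := by gcongr; exact eLpNormEssSup_integral_le hκ f
  have hc' : ‖c‖ₑ < 1 := by rwa [← ofReal_norm, ENNReal.ofReal_lt_one]
  rw [← eLpNormEssSup_eq_zero_iff]
  by_contra h0
  have := (ENNReal.mul_lt_mul_iff_left h0 hf).2 hc'
  rw [one_mul] at this
  exact not_le.2 this hle

end ProbabilityTheory.Kernel

namespace Exchangeable

variable {Ω 𝕏 : Type*} [MeasurableSpace Ω] [MeasurableSpace 𝕏] {P : Measure Ω} {X : ℕ → Ω → 𝕏}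

lemma map_pair_perm (hexch : Exchangeable P X) (hX : ∀ n, Measurable (X n)) {n : ℕ}
    (σ : Equiv.Perm (Fin n)) (i j : Fin n) :
    P.map (fun ω => (X (σ i) ω, X (σ j) ω)) = P.map (fun ω => (X i ω, X j ω)) := by
  have hpair : Measurable fun x : Fin n → 𝕏 => (x i, x j) := by fun_prop
  have h := congrArg (Measure.map fun x : Fin n → 𝕏 => (x i, x j)) (hexch n σ)
  rwa [Measure.map_map hpair (measurable_pi_lambda _ fun _ => hX _),
    Measure.map_map hpair (measurable_pi_lambda _ fun _ => hX _)] at h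

lemma measure_mem_mem_two_eq (hexch : Exchangeable P X) (hX : ∀ n, Measurable (X n))
    {A B : Set 𝕏} (hA : MeasurableSet A) (hB : MeasurableSet B) :
    P {ω | X 0 ω ∈ A ∧ X 2 ω ∈ B} = P {ω | X 0 ω ∈ A ∧ X 1 ω ∈ B} := by
  have h := congrArg (· (A ×ˢ B)) (hexch.map_pair_perm hX (Equiv.swap 1 2) (0 : Fin 3) 1)
  rw [Measure.map_apply (by fun_prop) (hA.prod hB),
    Measure.map_apply (by fun_prop) (hA.prod hB)] at h
  exact h

end Exchangeable

namespace HypH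

variable {Ω 𝕏 : Type*} [MeasurableSpace Ω] [MeasurableSpace 𝕏] {P : Measure Ω}
  {X : ℕ → Ω → 𝕏} {ν : Measure 𝕏} {R : Kernel 𝕏 𝕏} {a : ℕ → ℝ}

lemma setLIntegral_map_zero (hH : HypH P X ν R a) (f : 𝕏 → ℝ≥0∞) (hf : Measurable f)
    {A : Set 𝕏} (hA : MeasurableSet A) :
    ∫⁻ ω in X 0 ⁻¹' A, f (X 0 ω) ∂P = ∫⁻ t in A, f t ∂ν := by
  rw [← hH.marginal 0, setLIntegral_map hA hf (hH.meas 0)]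

lemma measure_mem_mem (hH : HypH P X ν R a) {n : ℕ} (hn : 1 ≤ n) {A B : Set 𝕏}
    (hA : MeasurableSet A) (hB : MeasurableSet B) :
    P {ω | X 0 ω ∈ A ∧ X n ω ∈ B} = ∫⁻ ω in X 0 ⁻¹' A,
      (ENNReal.ofReal (1 - a n) * ν B
        + ENNReal.ofReal (a n) / n * ∑ i : Fin n, R (X i ω) B) ∂P := by
  set A' := (fun x : Fin n → 𝕏 => x ⟨0, hn⟩) ⁻¹' A
  have hA' : MeasurableSet A' := measurable_pi_apply _ hA
  have := R.measurable_coe hB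
  rw [show {ω | X 0 ω ∈ A ∧ X n ω ∈ B} = {ω | (fun i : Fin n => X i ω) ∈ A' ∧ X n ω ∈ B} from rfl,
    hH.pred n hn B hB _ hA',
    setLIntegral_map hA' (by fun_prop) (measurable_pi_lambda _ fun i => hH.meas i)]
  rfl

lemma measure_mem_mem_one (hH : HypH P X ν R a) {A B : Set 𝕏} (hA : MeasurableSet A)
    (hB : MeasurableSet B) :
    P {ω | X 0 ω ∈ A ∧ X 1 ω ∈ B} =
      ∫⁻ t in A, (ENNReal.ofReal (1 - a 1) * ν B + ENNReal.ofReal (a 1) * R t B) ∂ν := by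
  have := R.measurable_coe hB
  rw [hH.measure_mem_mem le_rfl hA hB]
  simp only [Nat.cast_one, div_one, Fin.sum_univ_one, Fin.val_zero]
  exact hH.setLIntegral_map_zero (fun t => ENNReal.ofReal (1 - a 1) * ν B
    + ENNReal.ofReal (a 1) * R t B) (by fun_prop) hA

lemma invariant (hH : HypH P X ν R a) : R.Invariant ν := by
  have := hH.probν
  have ha := hH.a_mem 1 le_rfl
  ext B hB
  have h := hH.measure_mem_mem_one MeasurableSet.univ hB
  rw [Measure.restrict_univ, lintegral_add_left measurable_const, lintegral_const, measure_univ,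
    mul_one, lintegral_const_mul _ (R.measurable_coe hB),
    show {ω | X 0 ω ∈ Set.univ ∧ X 1 ω ∈ B} = X 1 ⁻¹' B by simp [Set.preimage],
    ← Measure.map_apply (hH.meas 1) hB, hH.marginal 1] at h
  have hsum : ENNReal.ofReal (1 - a 1) + ENNReal.ofReal (a 1) = 1 := by
    rw [← ENNReal.ofReal_add (by linarith [ha.2]) ha.1.le]; simp
  nth_rewrite 1 [← one_mul (ν B), ← hsum, add_mul] at h
  rw [Measure.bind_apply hB R.aemeasurable]
  refine ((ENNReal.mul_right_inj ?_ ENNReal.ofReal_ne_top).1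
    ((ENNReal.add_right_inj (by finiteness)).1 h)).symm
  simpa using ha.1

lemma map_restrict_preimage_zero (hH : HypH P X ν R a) {A : Set 𝕏} (hA : MeasurableSet A) :
    (P.restrict (X 0 ⁻¹' A)).map (X 1) =
      (ENNReal.ofReal (1 - a 1) * ν A) • ν + ENNReal.ofReal (a 1) • (ν.restrict A).bind R := by
  ext B hB
  rw [Measure.map_apply (hH.meas 1) hB, Measure.restrict_apply (hH.meas 1 hB), Set.inter_comm,
    show X 0 ⁻¹' A ∩ X 1 ⁻¹' B = {ω | X 0 ω ∈ A ∧ X 1 ω ∈ B} from rfl,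
    hH.measure_mem_mem_one hA hB, lintegral_add_left measurable_const, setLIntegral_const,
    lintegral_const_mul _ (R.measurable_coe hB), Measure.add_apply, Measure.smul_apply,
    Measure.smul_apply, smul_eq_mul, smul_eq_mul, Measure.bind_apply hB R.aemeasurable]
  ring

lemma setLIntegral_kernel_apply_one (hH : HypH P X ν R a) {A B : Set 𝕏} (hA : MeasurableSet A)
    (hB : MeasurableSet B) :
    ∫⁻ ω in X 0 ⁻¹' A, R (X 1 ω) B ∂P =
      ∫⁻ t in A, (ENNReal.ofReal (1 - a 1) * ν B + ENNReal.ofReal (a 1) * (R ∘ₖ R) t B) ∂ν := by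
  rw [← lintegral_map (R.measurable_coe hB) (hH.meas 1), hH.map_restrict_preimage_zero hA,
    lintegral_add_measure, lintegral_smul_measure, lintegral_smul_measure,
    Measure.lintegral_bind R.aemeasurable (R.measurable_coe hB).aemeasurable,
    ← Measure.bind_apply hB R.aemeasurable, hH.invariant.def, lintegral_add_left measurable_const,
    setLIntegral_const, lintegral_const_mul _ ((R ∘ₖ R).measurable_coe hB)]
  simp_rw [Kernel.comp_apply' _ _ _ hB, smul_eq_mul]
  ring

lemma measure_mem_mem_two (hH : HypH P X ν R a) {A B : Set 𝕏} (hA : MeasurableSet A)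
    (hB : MeasurableSet B) :
    P {ω | X 0 ω ∈ A ∧ X 2 ω ∈ B} =
      ∫⁻ t in A, (ENNReal.ofReal (1 - a 2) * ν B + ENNReal.ofReal (a 2) / 2 * R t B
        + ENNReal.ofReal (a 2) / 2 *
          (ENNReal.ofReal (1 - a 1) * ν B + ENNReal.ofReal (a 1) * (R ∘ₖ R) t B)) ∂ν := by
  have := R.measurable_coe hB
  have := (R ∘ₖ R).measurable_coe hB
  have := hH.meas 0
  have := hH.meas 1
  set c₂ := ENNReal.ofReal (1 - a 2)
  set d₂ := ENNReal.ofReal (a 2) / 2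
  rw [hH.measure_mem_mem (by norm_num) hA hB]
  calc ∫⁻ ω in X 0 ⁻¹' A, (c₂ * ν B + ENNReal.ofReal (a 2) / (2 : ℕ) * ∑ i : Fin 2, R (X i ω) B) ∂P
      = ∫⁻ ω in X 0 ⁻¹' A, (c₂ * ν B + d₂ * R (X 0 ω) B) ∂P
          + d₂ * ∫⁻ ω in X 0 ⁻¹' A, R (X 1 ω) B ∂P := by
        rw [← lintegral_const_mul _ (by fun_prop), ← lintegral_add_right _ (by fun_prop)]
        simp only [Fin.sum_univ_two, Nat.cast_ofNat, Fin.val_zero, Fin.val_one, mul_add, add_assoc]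
        rfl
    _ = _ := by
        rw [hH.setLIntegral_map_zero (fun t => c₂ * ν B + d₂ * R t B) (by fun_prop) hA,
          hH.setLIntegral_kernel_apply_one hA hB,
          ← lintegral_const_mul _ (by fun_prop), ← lintegral_add_right _ (by fun_prop)]

lemma ae_predictive_eq (hH : HypH P X ν R a) {B : Set 𝕏} (hB : MeasurableSet B) :
    ∀ᵐ t ∂ν, ENNReal.ofReal (1 - a 1) * ν B + ENNReal.ofReal (a 1) * R t B =
      ENNReal.ofReal (1 - a 2) * ν B + ENNReal.ofReal (a 2) / 2 * R t B
        + ENNReal.ofReal (a 2) / 2 *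
          (ENNReal.ofReal (1 - a 1) * ν B + ENNReal.ofReal (a 1) * (R ∘ₖ R) t B) := by
  have := hH.probν
  have := R.measurable_coe hB
  have := (R ∘ₖ R).measurable_coe hB
  refine ae_eq_of_forall_setLIntegral_eq_of_sigmaFinite (by fun_prop) (by fun_prop)
    fun A hA _ => ?_
  rw [← hH.measure_mem_mem_one hA hB, ← hH.measure_mem_mem_two hA hB,
    hH.exch.measure_mem_mem_two_eq hH.meas hA hB]

lemma ae_mul_sub_eq (hH : HypH P X ν R a) {B : Set 𝕏} (hB : MeasurableSet B) :
    ∀ᵐ t ∂ν, (2 * a 1 - a 2) * ((R t).real B - ν.real B) =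
      a 1 * a 2 * ∫ y, ((R y).real B - ν.real B) ∂(R t) := by
  have := hH.probν
  have := hH.markov
  have h1 := hH.a_mem 1 le_rfl
  have h2 := hH.a_mem 2 (by norm_num)
  filter_upwards [hH.ae_predictive_eq hB] with t ht
  have hcomp : ((R ∘ₖ R) t B).toReal = ∫ y, (R y).real B ∂(R t) := by
    rw [Kernel.comp_apply' _ _ _ hB]
    exact (integral_toReal (R.measurable_coe hB).aemeasurable
      (ae_of_all _ fun _ => measure_lt_top _ _)).symm
  have hint : Integrable (fun y => (R y).real B) (R t) :=
    integrable_toReal_of_lintegral_ne_top (R.measurable_coe hB).aemeasurable (by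
      rw [← Kernel.comp_apply' _ _ _ hB]; exact measure_ne_top _ _)
  have hreal := congrArg ENNReal.toReal ht
  simp (disch := finiteness) only [ENNReal.toReal_add, ENNReal.toReal_mul, ENNReal.toReal_div,
    ENNReal.toReal_ofNat, ENNReal.toReal_ofReal h1.1.le, ENNReal.toReal_ofReal h2.1.le,
    ENNReal.toReal_ofReal (sub_nonneg.2 h1.2.le), ENNReal.toReal_ofReal (sub_nonneg.2 h2.2.le),
    hcomp] at hreal
  rw [integral_sub hint (integrable_const _), integral_const, probReal_univ, one_smul]
  simp only [measureReal_def] at *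
  linear_combination 2 * hreal

lemma ae_kernel_apply_eq (hH : HypH P X ν R a) (hac : ∀ᵐ x ∂ν, R x ≪ ν)
    (hc : (a 2 - 2 * a 1 + a 1 * a 2) / (a 1 * a 2) < 0) {B : Set 𝕏} (hB : MeasurableSet B) :
    ∀ᵐ t ∂ν, R t B = ν B := by
  have := hH.probν
  have := hH.markov
  have ha : 0 < a 1 * a 2 := mul_pos (hH.a_mem 1 le_rfl).1 (hH.a_mem 2 (by norm_num)).1
  have hneg : a 2 - 2 * a 1 + a 1 * a 2 < 0 := neg_of_div_neg_left hc ha.le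
  have hpos : 0 < 2 * a 1 - a 2 := by linarith
  have hbdd : eLpNormEssSup (fun t => (R t).real B - ν.real B) ν ≠ ∞ := by
    refine ((eLpNormEssSup_le_of_ae_bound (C := 1) (ae_of_all _ fun t => ?_)).trans_lt
      ENNReal.ofReal_lt_top).ne
    rw [Real.norm_eq_abs, abs_sub_le_iff]
    constructor <;> linarith [measureReal_nonneg (μ := R t) (s := B),
      measureReal_nonneg (μ := ν) (s := B), measureReal_le_one (μ := R t) (s := B),
      measureReal_le_one (μ := ν) (s := B)]
  have hcontr : ‖a 1 * a 2 / (2 * a 1 - a 2)‖ < 1 := by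
    rw [Real.norm_of_nonneg (div_nonneg ha.le hpos.le), div_lt_one hpos]
    linarith
  have hfix := Kernel.ae_eq_zero_of_ae_eq_smul_integral hac hbdd hcontr <| by
    filter_upwards [hH.ae_mul_sub_eq hB] with t ht
    rw [smul_eq_mul, div_mul_eq_mul_div, eq_div_iff hpos.ne']
    linarith
  filter_upwards [hfix] with t ht
  exact (ENNReal.toReal_eq_toReal_iff' (measure_ne_top _ _) (measure_ne_top _ _)).1
    (sub_eq_zero.1 ht)

end HypH

/-- under Hypothesis (H), if `R_x ≪ ν` for ν-a.e. `x` and `c* < 0`,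
then `R_x = ν` for ν-a.e. `x`. -/
theorem trivial_reinforcement_of_neg_cstar {Ω 𝕏 : Type*} [MeasurableSpace Ω] [MeasurableSpace 𝕏]
    [StandardBorelSpace 𝕏]
    (P : Measure Ω) (X : ℕ → Ω → 𝕏) (ν : Measure 𝕏) (R : Kernel 𝕏 𝕏) (a : ℕ → ℝ)
    (hH : HypH P X ν R a)
    (hac : ∀ᵐ x ∂ν, (R x : Measure 𝕏) ≪ ν)
    (hc : (a 2 - 2 * a 1 + a 1 * a 2) / (a 1 * a 2) < 0) :
    ∀ᵐ x ∂ν, (R x : Measure 𝕏) = ν := by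
  have := hH.probν
  have := hH.markov
  filter_upwards [Kernel.ae_eq_const_of_forall_ae_apply_eq fun B hB =>
    hH.ae_kernel_apply_eq hac hc hB] with x hx
  rw [hx, Kernel.const_apply]
end

section
/- Under the hypotheses of the finite-state sufficientness postulate (𝕏 = {x_1,…,x_k} finite, {D_1,…,D_m} a partition with 3 ≤ m ≤ k, (X_n)_{n≥1} exchangeable satisfying assumption (A), and ℙ(X_{n+1} = x_j | X_1,…,X_n) = f_{n,j}(N_{n,m(j)}) a.s. for functions f_{n,j} : {0,…,n} → [0,1]), for every pair i ≠ j with m(i) = m(j) there exists a constant d_{i,j} > 0 such that f_{n,i}(h) = d_{i,j}·f_{n,j}(h) for all n ≥ 0 and all h ∈ {0,…,n}; that is, the ratio f_{n,i}(h)/f_{n,j}(h) does not depend on n or h. -/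
open MeasureTheory ProbabilityTheory ENNReal

/-- Assumption (A): every finite string of observations has positive probability. -/
def PosAssumption {Ω : Type*} [MeasurableSpace Ω] {k : ℕ}
    (P : Measure Ω) (X : ℕ → Ω → Fin k) : Prop :=
  ∀ (n : ℕ) (y : Fin n → Fin k), 0 < P {ω | ∀ i : Fin n, X i ω = y i}

namespace PRCAux

lemma count_snoc {k n : ℕ} (y : Fin n → Fin k) (a : Fin k) (s : Finset (Fin k)) :
    (Finset.univ.filter (fun i : Fin (n+1) => (Fin.snoc y a : Fin (n+1) → Fin k) i ∈ s)).card
      = (Finset.univ.filter (fun i : Fin n => y i ∈ s)).card + (if a ∈ s then 1 else 0) := by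
  rw [Finset.card_filter, Finset.card_filter, Fin.sum_univ_castSucc]
  simp

lemma count_str_mem {k n h : ℕ} (hh : h ≤ n) {a b : Fin k} (s : Finset (Fin k))
    (ha : a ∈ s) (hb : b ∉ s) :
    (Finset.univ.filter (fun t : Fin n => (if (t : ℕ) < h then a else b) ∈ s)).card = h := by
  rw [Finset.card_filter,
    Fin.sum_univ_eq_sum_range (fun x => if (if x < h then a else b) ∈ s then (1:ℕ) else 0),
    ← Finset.card_filter]
  have : Finset.filter (fun x => (if x < h then a else b) ∈ s) (Finset.range n)
      = Finset.range h := by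
    ext x
    simp only [Finset.mem_filter, Finset.mem_range]
    by_cases hx : x < h <;> simp [hx, ha, hb] <;> omega
  rw [this, Finset.card_range]

lemma count_str_notMem {k n h : ℕ} {a b : Fin k} (s : Finset (Fin k))
    (ha : a ∉ s) (hb : b ∈ s) :
    (Finset.univ.filter (fun t : Fin n => (if (t : ℕ) < h then a else b) ∈ s)).card = n - h := by
  rw [Finset.card_filter,
    Fin.sum_univ_eq_sum_range (fun x => if (if x < h then a else b) ∈ s then (1:ℕ) else 0),
    ← Finset.card_filter]
  have : Finset.filter (fun x => (if x < h then a else b) ∈ s) (Finset.range n)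
      = Finset.Ico h n := by
    ext x
    simp only [Finset.mem_filter, Finset.mem_range, Finset.mem_Ico]
    by_cases hx : x < h <;> simp [hx, ha, hb] <;> omega
  rw [this, Nat.card_Ico]

lemma snoc_snoc_swap {α : Type*} {n : ℕ} (y : Fin n → α) (a b : α) :
    (Fin.snoc (Fin.snoc y a) b : Fin (n+2) → α) ∘
      (Equiv.swap (Fin.castSucc (Fin.last n)) (Fin.last (n+1))) = Fin.snoc (Fin.snoc y b) a := by
  funext i
  refine Fin.lastCases ?_ (fun j => ?_) i
  · simp [Equiv.swap_apply_right]
  · refine Fin.lastCases ?_ (fun j' => ?_) j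
    · simp [Equiv.swap_apply_left]
    · have hlt := j'.isLt
      have h1 : (j'.castSucc.castSucc) ≠ Fin.castSucc (Fin.last n) := by
        simp [Fin.ext_iff]; omega
      have h2 : (j'.castSucc.castSucc) ≠ Fin.last (n+1) := by
        simp [Fin.ext_iff]; omega
      simp [Equiv.swap_apply_of_ne_of_ne h1 h2]

variable {Ω : Type*} [MeasurableSpace Ω] {k : ℕ} (P : Measure Ω) (X : ℕ → Ω → Fin k)

/-- real-valued probability of observing the string `y`. -/
noncomputable def strProb (n : ℕ) (y : Fin n → Fin k) : ℝ :=
  (P {ω | ∀ i : Fin n, X i ω = y i}).toReal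

lemma strProb_pos [IsFiniteMeasure P] (hpos : PosAssumption P X) (n : ℕ) (y : Fin n → Fin k) :
    0 < strProb P X n y :=
  ENNReal.toReal_pos (hpos n y).ne' (measure_ne_top P _)

lemma perm_prob (hmeas : ∀ n, Measurable (X n)) (hexch : Exchangeable P X)
    (n : ℕ) (σ : Equiv.Perm (Fin n)) (y : Fin n → Fin k) :
    P {ω | ∀ i : Fin n, X i ω = y (σ i)} = P {ω | ∀ i : Fin n, X i ω = y i} := by
  have h1 := hexch n σ⁻¹
  have hms : MeasurableSet ({y} : Set (Fin n → Fin k)) := measurableSet_singleton y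
  have hm1 : Measurable (fun ω (i : Fin n) => X (σ⁻¹ i) ω) :=
    measurable_pi_lambda _ (fun i => hmeas _)
  have hm2 : Measurable (fun ω (i : Fin n) => X i ω) :=
    measurable_pi_lambda _ (fun i => hmeas _)
  have := congrArg (fun μ : Measure (Fin n → Fin k) => μ {y}) h1
  rw [Measure.map_apply hm1 hms, Measure.map_apply hm2 hms] at this
  have e1 : (fun ω (i : Fin n) => X (σ⁻¹ i) ω) ⁻¹' {y} =
      {ω | ∀ i : Fin n, X i ω = y (σ i)} := by
    ext ω
    simp only [Set.mem_preimage, Set.mem_singleton_iff, funext_iff, Set.mem_setOf_eq]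
    constructor
    · intro H i; have := H (σ i); simpa using this
    · intro H i; have := H (σ⁻¹ i); simpa using this
  have e2 : (fun ω (i : Fin n) => X i ω) ⁻¹' {y} = {ω | ∀ i : Fin n, X i ω = y i} := by
    ext ω; simp [funext_iff]
  rw [e1, e2] at this
  exact this

lemma set_snoc (n : ℕ) (y : Fin n → Fin k) (j : Fin k) :
    {ω | ∀ i : Fin (n+1), X i ω = (Fin.snoc y j : Fin (n+1) → Fin k) i} =
      {ω | (∀ i : Fin n, X i ω = y i) ∧ X n ω = j} := by
  ext ω
  simp only [Set.mem_setOf_eq]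
  constructor
  · intro H
    refine ⟨fun i => ?_, ?_⟩
    · have := H i.castSucc; simpa using this
    · have := H (Fin.last n); simpa using this
  · rintro ⟨H1, H2⟩ i
    refine Fin.lastCases ?_ (fun j' => ?_) i
    · simpa using H2
    · simpa using H1 j'

lemma strProb_swap (hmeas : ∀ n, Measurable (X n)) (hexch : Exchangeable P X)
    (n : ℕ) (y : Fin n → Fin k) (a b : Fin k) :
    strProb P X (n+2) (Fin.snoc (Fin.snoc y a) b) =
      strProb P X (n+2) (Fin.snoc (Fin.snoc y b) a) := by
  unfold strProb
  congr 1
  have hp := perm_prob P X hmeas hexch (n+2)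
    (Equiv.swap (Fin.castSucc (Fin.last n)) (Fin.last (n+1))) (Fin.snoc (Fin.snoc y b) a)
  have hc := snoc_snoc_swap y b a
  calc P {ω | ∀ i : Fin (n+2), X i ω = (Fin.snoc (Fin.snoc y a) b : Fin (n+2) → Fin k) i}
      = P {ω | ∀ i : Fin (n+2), X i ω = (Fin.snoc (Fin.snoc y b) a : Fin (n+2) → Fin k)
          (Equiv.swap (Fin.castSucc (Fin.last n)) (Fin.last (n+1)) i)} := by
        congr 1; ext ω
        simp only [Set.mem_setOf_eq]
        constructor
        · intro H i; rw [show ((Fin.snoc (Fin.snoc y b) a : Fin (n+2) → Fin k)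
            (Equiv.swap (Fin.castSucc (Fin.last n)) (Fin.last (n+1)) i))
            = (Fin.snoc (Fin.snoc y a) b : Fin (n+2) → Fin k) i from congrFun hc i]
          exact H i
        · intro H i
          rw [← show ((Fin.snoc (Fin.snoc y b) a : Fin (n+2) → Fin k)
            (Equiv.swap (Fin.castSucc (Fin.last n)) (Fin.last (n+1)) i))
            = (Fin.snoc (Fin.snoc y a) b : Fin (n+2) → Fin k) i from congrFun hc i]
          exact H i
    _ = P {ω | ∀ i : Fin (n+2), X i ω = (Fin.snoc (Fin.snoc y b) a : Fin (n+2) → Fin k) i} := hp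

end PRCAux

/-- `X` is a measure-valued Pólya urn sequence on the finite state space `Fin k`
with parameters `(θ, ν, R)`, where `ν` and `R x` are given by their weight functions:
`ℙ(X_1 = j) = ν j` and
`ℙ(X_{n+1} = j | X_1 = y_1, …, X_n = y_n) = (θ ν(j) + ∑_{i=1}^n R_{y_i}(j))/(θ + n)`
(the case `n = 0` of the displayed identity is the initial condition). -/
def IsMVPSFin {Ω : Type*} [MeasurableSpace Ω] {k : ℕ} (P : Measure Ω) (X : ℕ → Ω → Fin k)
    (θ : ℝ) (ν : Fin k → ℝ) (R : Fin k → Fin k → ℝ) : Prop :=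
  0 < θ ∧
  ∀ (n : ℕ) (y : Fin n → Fin k) (j : Fin k),
    P {ω | (∀ i : Fin n, X i ω = y i) ∧ X n ω = j} =
      ENNReal.ofReal ((θ * ν j + ∑ i : Fin n, R (y i) j) / (θ + n)) *
        P {ω | ∀ i : Fin n, X i ω = y i}

/-- under the hypotheses of the finite-state sufficientness
postulate, for each pair `i ≠ j` in the same partition block the ratio
`f_{n,i}(h)/f_{n,j}(h)` is a constant `d_{i,j} > 0`, independent of `n` and `h`. -/
theorem predictive_ratio_constant {Ω : Type*} [MeasurableSpace Ω]
    (P : Measure Ω) [IsProbabilityMeasure P]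
    {k m : ℕ} (hm3 : 3 ≤ m) (hmk : m ≤ k)
    (X : ℕ → Ω → Fin k) (hmeas : ∀ n, Measurable (X n))
    (hexch : Exchangeable P X) (hpos : PosAssumption P X)
    (D : Fin m → Finset (Fin k))
    (hDne : ∀ l, (D l).Nonempty)
    (hDdisj : ∀ l l', l ≠ l' → Disjoint (D l) (D l'))
    (hDcover : ∀ j : Fin k, ∃ l, j ∈ D l)
    (mj : Fin k → Fin m) (hmj : ∀ j, j ∈ D (mj j))
    (f : ℕ → Fin k → ℕ → ℝ)
    (hf01 : ∀ n j h, h ≤ n → f n j h ∈ Set.Icc (0 : ℝ) 1)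
    (hpred : ∀ (n : ℕ) (j : Fin k) (y : Fin n → Fin k),
      P {ω | (∀ i : Fin n, X i ω = y i) ∧ X n ω = j} =
        ENNReal.ofReal
            (f n j (Finset.univ.filter (fun i : Fin n => y i ∈ D (mj j))).card) *
          P {ω | ∀ i : Fin n, X i ω = y i}) :
    ∀ i j : Fin k, i ≠ j → mj i = mj j →
      ∃ d : ℝ, 0 < d ∧ ∀ (n h : ℕ), h ≤ n → f n i h = d * f n j h := by
  intro i j hij hb
  -- membership in a block determines the block
  have hmju : ∀ (a : Fin k) (l : Fin m), a ∈ D l → mj a = l := by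
    intro a l hal
    by_contra hne
    exact Finset.disjoint_left.mp (hDdisj _ _ hne) (hmj a) hal
  haveI hntm : Nontrivial (Fin m) := Fin.nontrivial_iff_two_le.mpr (by omega)
  have hcardle : ∀ (n : ℕ) (y : Fin n → Fin k) (l : Fin m),
      (Finset.univ.filter (fun t : Fin n => y t ∈ D l)).card ≤ n := by
    intro n y l
    calc (Finset.univ.filter (fun t : Fin n => y t ∈ D l)).card
        ≤ (Finset.univ : Finset (Fin n)).card := Finset.card_filter_le _ _
      _ = n := by simp
  have hps := PRCAux.strProb_pos P X hpos
  have hsnoc : ∀ (n : ℕ) (y : Fin n → Fin k) (a : Fin k),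
      PRCAux.strProb P X (n+1) (Fin.snoc y a)
        = f n a ((Finset.univ.filter (fun t : Fin n => y t ∈ D (mj a))).card)
            * PRCAux.strProb P X n y := by
    intro n y a
    unfold PRCAux.strProb
    rw [PRCAux.set_snoc, hpred, ENNReal.toReal_mul, ENNReal.toReal_ofReal]
    exact (hf01 _ _ _ (hcardle n y (mj a))).1
  -- positivity of predictive weights
  have hfpos : ∀ (n : ℕ) (a : Fin k) (c : ℕ), c ≤ n → 0 < f n a c := by
    intro n a c hc
    obtain ⟨l', hl'⟩ := exists_ne (mj a)
    obtain ⟨w', hw'⟩ := hDne l'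
    have hwa : w' ∉ D (mj a) := by
      intro hmem
      exact hl' ((hmju w' l' hw') ▸ hmju w' (mj a) hmem)
    have hcount : (Finset.univ.filter
        (fun t : Fin n => (if (t : ℕ) < c then a else w') ∈ D (mj a))).card = c :=
      PRCAux.count_str_mem hc _ (hmj a) hwa
    have h1 := hsnoc n (fun t : Fin n => if (t : ℕ) < c then a else w') a
    rw [hcount] at h1
    nlinarith [hps (n+1) (Fin.snoc (fun t : Fin n => if (t : ℕ) < c then a else w') a),
      hps n (fun t : Fin n => if (t : ℕ) < c then a else w')]
  -- the fundamental exchangeability equation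
  have keyeq : ∀ (n : ℕ) (y : Fin n → Fin k) (a b : Fin k),
      f n a ((Finset.univ.filter (fun t : Fin n => y t ∈ D (mj a))).card) *
        f (n+1) b ((Finset.univ.filter (fun t : Fin n => y t ∈ D (mj b))).card
          + (if a ∈ D (mj b) then 1 else 0))
      = f n b ((Finset.univ.filter (fun t : Fin n => y t ∈ D (mj b))).card) *
        f (n+1) a ((Finset.univ.filter (fun t : Fin n => y t ∈ D (mj a))).card
          + (if b ∈ D (mj a) then 1 else 0)) := by
    intro n y a b
    have hyab := PRCAux.strProb_swap P X hmeas hexch n y a b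
    rw [hsnoc (n+1) (Fin.snoc y a) b, hsnoc n y a,
      hsnoc (n+1) (Fin.snoc y b) a, hsnoc n y b,
      PRCAux.count_snoc y a (D (mj b)), PRCAux.count_snoc y b (D (mj a))] at hyab
    have hp := hps n y
    apply mul_right_cancel₀ hp.ne'
    linear_combination hyab
  -- a state outside the common block
  obtain ⟨l', hl'⟩ := exists_ne (mj i)
  obtain ⟨w, hw⟩ := hDne l'
  have hwl : mj w = l' := hmju w l' hw
  have hwi : w ∉ D (mj i) := fun hmem => hl' (hwl.symm.trans (hmju w (mj i) hmem))
  have hiw : i ∉ D (mj w) := fun hmem => hl' (((hmju i (mj w) hmem).trans hwl).symm)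
  have hjw : j ∉ D (mj w) := fun hmem =>
    hl' ((hb.trans ((hmju j (mj w) hmem).trans hwl)).symm)
  have hwj : w ∉ D (mj j) := by rw [← hb]; exact hwi
  have hib : i ∈ D (mj j) := hb ▸ hmj i
  have hjb : j ∈ D (mj i) := by rw [hb]; exact hmj j
  have stepI : ∀ n h, h ≤ n → f n i h * f (n+1) w (n - h) = f n w (n - h) * f (n+1) i h := by
    intro n h hh
    have hk := keyeq n (fun t : Fin n => if (t : ℕ) < h then i else w) i w
    rw [PRCAux.count_str_mem hh _ (hmj i) hwi,
      PRCAux.count_str_notMem _ hiw (hmj w),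
      if_neg hiw, if_neg hwi] at hk
    simpa using hk
  have stepII : ∀ n h, h ≤ n → f n j h * f (n+1) w (n - h) = f n w (n - h) * f (n+1) j h := by
    intro n h hh
    have hk := keyeq n (fun t : Fin n => if (t : ℕ) < h then i else w) j w
    rw [PRCAux.count_str_mem hh _ hib hwj,
      PRCAux.count_str_notMem _ hiw (hmj w),
      if_neg hjw, if_neg hwj] at hk
    simpa using hk
  have stepIII : ∀ n : ℕ, f n i n * f (n+1) j (n+1) = f n j n * f (n+1) i (n+1) := by
    intro n
    have hk := keyeq n (fun t : Fin n => if (t : ℕ) < n then i else w) i j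
    rw [PRCAux.count_str_mem le_rfl _ (hmj i) hwi,
      PRCAux.count_str_mem le_rfl _ hib hwj,
      if_pos hib, if_pos hjb] at hk
    exact hk
  have main : ∀ n h, h ≤ n → f n i h * f 0 j 0 = f 0 i 0 * f n j h := by
    intro n
    induction n with
    | zero =>
      intro h hh
      have : h = 0 := by omega
      subst this; ring
    | succ n IH =>
      intro h hh
      by_cases hc : h ≤ n
      · have I := stepI n h hc
        have II := stepII n h hc
        have IH' := IH h hc
        have hB : 0 < f n w (n - h) := hfpos n w (n - h) (by omega)
        have step : f n w (n - h) * (f (n+1) i h * f 0 j 0)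
            = f n w (n - h) * (f 0 i 0 * f (n+1) j h) := by
          linear_combination (-(f 0 j 0)) * I + f (n+1) w (n - h) * IH' + f 0 i 0 * II
        exact mul_left_cancel₀ hB.ne' step
      · have he : h = n + 1 := by omega
        subst he
        have III := stepIII n
        have IH' := IH n le_rfl
        have hnj : 0 < f n j n := hfpos n j n le_rfl
        have step : f n j n * (f (n+1) i (n+1) * f 0 j 0)
            = f n j n * (f 0 i 0 * f (n+1) j (n+1)) := by
          linear_combination (-(f 0 j 0)) * III + f (n+1) j (n+1) * IH'
        exact mul_left_cancel₀ hnj.ne' step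
  refine ⟨f 0 i 0 / f 0 j 0, div_pos (hfpos 0 i 0 le_rfl) (hfpos 0 j 0 le_rfl), ?_⟩
  intro n h hh
  have hm := main n h hh
  have hj0 := hfpos 0 j 0 le_rfl
  rw [div_mul_eq_mul_div, eq_div_iff hj0.ne']
  linear_combination hm
end

section
/- Let 𝕏 = {x_1,…,x_k} be finite and let (X_n)_{n≥1} be an exchangeable sequence of 𝕏-valued random variables such that for every j = 1,…,k and n ≥ 1 the predictive probability ℙ(X_{n+1} = x_j | X_1,…,X_n) is almost surely equal to a constant c_{n,j} depending only on n and j (i.e., it does not depend on the observed values X_1,…,X_n). Then c_{n,j} = ℙ(X_1 = x_j) for all n and j, and (X_n)_{n≥1} is i.i.d. with common distribution ℙ(X_1 ∈ ·). -/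
open MeasureTheory ProbabilityTheory ENNReal

/-- if `X` is exchangeable on a finite state space and each
predictive probability `ℙ(X_{n+1} = x_j | X_1,…,X_n)` is a.s. equal to a constant
`c_{n,j}`, then `c_{n,j} = ℙ(X_1 = x_j)` and `X` is i.i.d. with common distribution
`ℙ(X_1 ∈ ·)`. -/
theorem iid_of_constant_predictive {Ω : Type*} [MeasurableSpace Ω]
    (P : Measure Ω) [IsProbabilityMeasure P] {k : ℕ}
    (X : ℕ → Ω → Fin k) (hmeas : ∀ n, Measurable (X n))
    (hexch : Exchangeable P X)
    (c : ℕ → Fin k → ℝ≥0∞)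
    (hpred : ∀ (n : ℕ), 1 ≤ n → ∀ (j : Fin k) (y : Fin n → Fin k),
      P {ω | (∀ i : Fin n, X i ω = y i) ∧ X n ω = j} =
        c n j * P {ω | ∀ i : Fin n, X i ω = y i}) :
    (∀ n : ℕ, 1 ≤ n → ∀ j : Fin k, c n j = P {ω | X 0 ω = j}) ∧
      ∀ (n : ℕ) (y : Fin n → Fin k),
        P {ω | ∀ i : Fin n, X i ω = y i} = ∏ i : Fin n, P {ω | X 0 ω = y i} := by
  classical
  have hms : ∀ (n : ℕ) (y : Fin n → Fin k), MeasurableSet {ω | ∀ i : Fin n, X i ω = y i} := by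
    intro n y
    have h : {ω | ∀ i : Fin n, X i ω = y i} = ⋂ i : Fin n, X (i : ℕ) ⁻¹' {y i} := by
      ext ω; simp
    rw [h]
    exact MeasurableSet.iInter fun i => (hmeas i) (measurableSet_singleton (y i))
  have hsum : ∀ n : ℕ, ∑ y : Fin n → Fin k, P {ω | ∀ i : Fin n, X i ω = y i} = 1 := by
    intro n
    have hd : Pairwise (Function.onFun Disjoint
        fun y : Fin n → Fin k => {ω | ∀ i : Fin n, X i ω = y i}) := by
      intro y z hyz
      refine Set.disjoint_left.mpr fun ω hy hz => hyz ?_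
      exact funext fun i => (hy i).symm.trans (hz i)
    have hU : (⋃ y : Fin n → Fin k, {ω | ∀ i : Fin n, X i ω = y i}) = Set.univ := by
      ext ω
      simp only [Set.mem_iUnion, Set.mem_setOf_eq, Set.mem_univ, iff_true]
      exact ⟨fun i => X i ω, fun i => rfl⟩
    calc ∑ y : Fin n → Fin k, P {ω | ∀ i : Fin n, X i ω = y i}
        = ∑' y : Fin n → Fin k, P {ω | ∀ i : Fin n, X i ω = y i} := (tsum_fintype _).symm
      _ = P (⋃ y : Fin n → Fin k, {ω | ∀ i : Fin n, X i ω = y i}) :=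
          (measure_iUnion hd (fun y => hms n y)).symm
      _ = 1 := by rw [hU, measure_univ]
  have hmarg : ∀ (n : ℕ) (j : Fin k), P {ω | X n ω = j} = P {ω | X 0 ω = j} := by
    intro n j
    have hσ := hexch (n + 1) (Equiv.swap 0 (Fin.last n))
    have hmL : Measurable fun ω (i : Fin (n + 1)) => X (Equiv.swap 0 (Fin.last n) i) ω :=
      measurable_pi_lambda _ fun i => hmeas _
    have hmR : Measurable fun ω (i : Fin (n + 1)) => X i ω :=
      measurable_pi_lambda _ fun i => hmeas _
    have hs : MeasurableSet {f : Fin (n + 1) → Fin k | f 0 = j} := by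
      have he : {f : Fin (n + 1) → Fin k | f 0 = j} =
          (fun f : Fin (n + 1) → Fin k => f 0) ⁻¹' {j} := rfl
      rw [he]
      exact (measurable_pi_apply 0) (measurableSet_singleton j)
    have h1 := congrArg (fun μ : Measure (Fin (n + 1) → Fin k) =>
      μ {f : Fin (n + 1) → Fin k | f 0 = j}) hσ
    rw [Measure.map_apply hmL hs, Measure.map_apply hmR hs] at h1
    have e1 : (fun ω (i : Fin (n + 1)) => X (Equiv.swap 0 (Fin.last n) i) ω) ⁻¹'
        {f : Fin (n + 1) → Fin k | f 0 = j} = {ω | X n ω = j} := by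
      ext ω; simp [Equiv.swap_apply_left]
    have e2 : (fun ω (i : Fin (n + 1)) => X i ω) ⁻¹'
        {f : Fin (n + 1) → Fin k | f 0 = j} = {ω | X 0 ω = j} := by
      ext ω; simp
    rw [e1, e2] at h1
    exact h1
  have hc : ∀ n : ℕ, 1 ≤ n → ∀ j : Fin k, c n j = P {ω | X 0 ω = j} := by
    intro n hn j
    have hd : Pairwise (Function.onFun Disjoint
        fun y : Fin n → Fin k => {ω | (∀ i : Fin n, X i ω = y i) ∧ X n ω = j}) := by
      intro y z hyz
      refine Set.disjoint_left.mpr fun ω hy hz => hyz ?_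
      exact funext fun i => (hy.1 i).symm.trans (hz.1 i)
    have hm : ∀ y : Fin n → Fin k,
        MeasurableSet {ω | (∀ i : Fin n, X i ω = y i) ∧ X n ω = j} := by
      intro y
      have h : {ω | (∀ i : Fin n, X i ω = y i) ∧ X n ω = j} =
          {ω | ∀ i : Fin n, X i ω = y i} ∩ X n ⁻¹' {j} := by
        ext ω; simp [Set.mem_setOf_eq]
      rw [h]
      exact (hms n y).inter ((hmeas n) (measurableSet_singleton j))
    have hU : (⋃ y : Fin n → Fin k, {ω | (∀ i : Fin n, X i ω = y i) ∧ X n ω = j}) =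
        {ω | X n ω = j} := by
      ext ω
      simp only [Set.mem_iUnion, Set.mem_setOf_eq]
      constructor
      · rintro ⟨y, _, h⟩; exact h
      · intro h; exact ⟨fun i => X i ω, fun i => rfl, h⟩
    have key : P {ω | X n ω = j} = c n j := by
      calc P {ω | X n ω = j}
          = P (⋃ y : Fin n → Fin k, {ω | (∀ i : Fin n, X i ω = y i) ∧ X n ω = j}) := by
            rw [hU]
        _ = ∑' y : Fin n → Fin k, P {ω | (∀ i : Fin n, X i ω = y i) ∧ X n ω = j} :=
            measure_iUnion hd hm
        _ = ∑ y : Fin n → Fin k, P {ω | (∀ i : Fin n, X i ω = y i) ∧ X n ω = j} :=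
            tsum_fintype _
        _ = ∑ y : Fin n → Fin k, c n j * P {ω | ∀ i : Fin n, X i ω = y i} := by
            refine Finset.sum_congr rfl fun y _ => hpred n hn j y
        _ = c n j * ∑ y : Fin n → Fin k, P {ω | ∀ i : Fin n, X i ω = y i} := by
            rw [Finset.mul_sum]
        _ = c n j := by rw [hsum n, mul_one]
    rw [← key, hmarg n j]
  refine ⟨hc, ?_⟩
  have hsplit : ∀ (n : ℕ) (y : Fin (n + 1) → Fin k),
      {ω | ∀ i : Fin (n + 1), X i ω = y i} =
      {ω | (∀ i : Fin n, X i ω = y i.castSucc) ∧ X n ω = y (Fin.last n)} := by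
    intro n y
    ext ω
    simp only [Set.mem_setOf_eq]
    constructor
    · intro h
      refine ⟨fun i => ?_, ?_⟩
      · simpa using h i.castSucc
      · simpa using h (Fin.last n)
    · rintro ⟨h1, h2⟩ i
      refine Fin.lastCases ?_ (fun i => ?_) i
      · simpa using h2
      · simpa using h1 i
  intro n
  induction n with
  | zero =>
    intro y
    simp
  | succ n ih =>
    intro y
    rw [hsplit n y, Fin.prod_univ_castSucc]
    rcases Nat.eq_zero_or_pos n with rfl | hn
    · have h : {ω | (∀ i : Fin 0, X i ω = y i.castSucc) ∧ X 0 ω = y (Fin.last 0)} =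
          {ω | X 0 ω = y 0} := by
        ext ω
        simp [Fin.last]
      rw [h]
      simp [Fin.last]
    · rw [hpred n hn (y (Fin.last n)) (fun i => y i.castSucc), hc n hn,
        ih (fun i => y i.castSucc), mul_comm]
end
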